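/- arXiv:1807.03997 — 10 statements merged into one kernel-verified Lean document; each statement's English description precedes it below -/
import Mathlib

section
/- Let W be a nonnegative random variable on a probability space and let q ∈ (0,1]. Assume that for every u ≥ 0 one has P(W ≥ u^q) = e^{−u}. Then for every u ≥ 1: E[W · 1_{W ≥ u^q}] ≤ 2 u^q e^{−u} and E[W² · 1_{W ≥ u^q}] ≤ 5 u^{2q} e^{−u}. -/
/-!
With `X = W ^ q⁻¹` the hypothesis says `P(X ≥ v) = e^{-v}`, so `X` is standard exponential and
`E[W^s 1_{W ≥ u^q}] = ∫_u^∞ x^{qs} e^{-x} dx`. For `x ≥ u ≥ 1` we have `x ≤ u (1 + (x - u))`, so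
for every integer `n ≥ qs` the shift `x = u + t` bounds this by `u^{qs} e^{-u} ∫_0^∞ (1+t)^n e^{-t} dt`,
and that integral is `∑ k, C(n,k) k!`, which is `2` for `n = 1` and `5` for `n = 2`.
-/

open MeasureTheory ProbabilityTheory Real Set Finset
open scoped ENNReal Nat

lemma one_add_pow_mul_exp_neg_eq_sum (n : ℕ) (t : ℝ) :
    (1 + t) ^ n * exp (-t) = ∑ k ∈ range (n + 1), n.choose k * (t ^ k * exp (-t)) := by
  simp only [add_comm (1 : ℝ) t, add_pow, one_pow, mul_one, Finset.sum_mul]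
  exact Finset.sum_congr rfl fun k _ => by ring

lemma integrableOn_pow_mul_exp_neg_Ioi (n : ℕ) :
    IntegrableOn (fun t : ℝ => t ^ n * exp (-t)) (Ioi 0) :=
  (GammaIntegral_convergent (s := n + 1) (by positivity)).congr_fun
    (fun t _ => by simp [mul_comm]) measurableSet_Ioi

lemma integral_pow_mul_exp_neg_Ioi (n : ℕ) : ∫ t in Ioi (0 : ℝ), t ^ n * exp (-t) = n ! := by
  rw [← Gamma_nat_eq_factorial, Gamma_eq_integral (by positivity)]
  exact setIntegral_congr_fun measurableSet_Ioi fun t _ => by simp [mul_comm]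

lemma integrableOn_one_add_pow_mul_exp_neg_Ioi (n : ℕ) :
    IntegrableOn (fun t : ℝ => (1 + t) ^ n * exp (-t)) (Ioi 0) := by
  simp_rw [one_add_pow_mul_exp_neg_eq_sum]
  exact integrable_finsetSum _ fun k _ => (integrableOn_pow_mul_exp_neg_Ioi k).const_mul _

lemma integral_one_add_pow_mul_exp_neg_Ioi (n : ℕ) :
    ∫ t in Ioi (0 : ℝ), (1 + t) ^ n * exp (-t) = ∑ k ∈ range (n + 1), (n.choose k * k ! : ℝ) := by
  simp_rw [one_add_pow_mul_exp_neg_eq_sum]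
  rw [integral_finsetSum _ fun k _ => (integrableOn_pow_mul_exp_neg_Ioi k).const_mul _]
  simp_rw [integral_const_mul, integral_pow_mul_exp_neg_Ioi]

lemma integrableOn_Ioi_comp_sub {g : ℝ → ℝ} (hg : IntegrableOn g (Ioi 0)) (a : ℝ) :
    IntegrableOn (fun x => g (x - a)) (Ioi a) := by
  have h := ((measurePreserving_sub_right volume a).integrableOn_comp_preimage
    (MeasurableEquiv.subRight a).measurableEmbedding).2 hg
  simpa [Function.comp_def] using h

lemma setIntegral_Ioi_comp_sub (g : ℝ → ℝ) (a : ℝ) :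
    ∫ x in Ioi a, g (x - a) = ∫ t in Ioi 0, g t := by
  simpa using (measurePreserving_sub_right volume a).setIntegral_preimage_emb
    (MeasurableEquiv.subRight a).measurableEmbedding g (Ioi 0)

lemma rpow_le_rpow_mul_one_add_sub_pow {u x p : ℝ} {n : ℕ} (hu : 1 ≤ u) (hux : u ≤ x)
    (hp : 0 ≤ p) (hpn : p ≤ n) : x ^ p ≤ u ^ p * (1 + (x - u)) ^ n := by
  have hu0 : 0 ≤ u := zero_le_one.trans hu
  calc x ^ p ≤ (u * (1 + (x - u))) ^ p :=
        rpow_le_rpow (hu0.trans hux) (by nlinarith) hp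
    _ = u ^ p * (1 + (x - u)) ^ p := mul_rpow hu0 (by linarith)
    _ ≤ u ^ p * (1 + (x - u)) ^ (n : ℝ) := by gcongr; linarith
    _ = u ^ p * (1 + (x - u)) ^ n := by rw [rpow_natCast]

lemma setIntegral_Ioi_rpow_mul_exp_neg_le {u p : ℝ} {n : ℕ} (hu : 1 ≤ u) (hp : 0 ≤ p)
    (hpn : p ≤ n) :
    ∫ x in Ioi u, x ^ p * exp (-x) ≤
      (∑ k ∈ range (n + 1), (n.choose k * k ! : ℝ)) * u ^ p * exp (-u) := by
  set g : ℝ → ℝ := fun t => (1 + t) ^ n * exp (-t)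
  have hpoint : ∀ x ∈ Ioi u, x ^ p * exp (-x) ≤ u ^ p * exp (-u) * g (x - u) := by
    intro x hx
    have hexp : exp (-x) = exp (-u) * exp (-(x - u)) := by rw [← exp_add]; ring_nf
    rw [hexp]
    calc x ^ p * (exp (-u) * exp (-(x - u)))
        ≤ u ^ p * (1 + (x - u)) ^ n * (exp (-u) * exp (-(x - u))) := by
          gcongr
          exact rpow_le_rpow_mul_one_add_sub_pow hu (le_of_lt hx) hp hpn
      _ = u ^ p * exp (-u) * g (x - u) := by ring
  calc ∫ x in Ioi u, x ^ p * exp (-x)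
      ≤ ∫ x in Ioi u, u ^ p * exp (-u) * g (x - u) :=
        setIntegral_mono_of_nonneg (fun x hx => mul_nonneg
          (rpow_nonneg (zero_le_one.trans (hu.trans (le_of_lt hx))) _) (exp_nonneg _))
          hpoint
          ((integrableOn_Ioi_comp_sub (integrableOn_one_add_pow_mul_exp_neg_Ioi n) u).const_mul _)
    _ = (∑ k ∈ range (n + 1), (n.choose k * k ! : ℝ)) * u ^ p * exp (-u) := by
        rw [integral_const_mul, setIntegral_Ioi_comp_sub g,
          integral_one_add_pow_mul_exp_neg_Ioi]
        ring

lemma expMeasure_eq_withDensity (r : ℝ) :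
    expMeasure r = volume.withDensity (exponentialPDF r) := rfl

lemma expMeasure_one_Ici {a : ℝ} (ha : 0 ≤ a) :
    expMeasure 1 (Ici a) = ENNReal.ofReal (exp (-a)) := by
  have hint : IntegrableOn (fun x => exp (-x)) (Ioi a) := by
    simpa using exp_neg_integrableOn_Ioi a zero_lt_one
  rw [expMeasure_eq_withDensity, withDensity_apply _ measurableSet_Ici, ← integral_exp_neg_Ioi,
    ofReal_integral_eq_lintegral_ofReal hint (Filter.Eventually.of_forall fun _ => (exp_pos _).le),
    ← setLIntegral_congr Ioi_ae_eq_Ici]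
  refine setLIntegral_congr_fun measurableSet_Ioi fun x hx => ?_
  simpa using exponentialPDF_of_nonneg (r := 1) (ha.trans (le_of_lt hx))

lemma setIntegral_expMeasure_one_Ici {u : ℝ} (hu : 0 ≤ u) (g : ℝ → ℝ) :
    ∫ x in Ici u, g x ∂expMeasure 1 = ∫ x in Ioi u, g x * exp (-x) := by
  rw [expMeasure_eq_withDensity,
    setIntegral_withDensity_eq_setIntegral_toReal_smul₀' (f := exponentialPDF 1) _
    (measurable_exponentialPDFReal 1).ennreal_ofReal.aemeasurable
    (ae_of_all _ fun _ => ENNReal.ofReal_lt_top), integral_Ici_eq_integral_Ioi]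
  refine setIntegral_congr_fun measurableSet_Ioi fun x hx => ?_
  simp [exponentialPDF_of_nonneg (r := 1) (hu.trans (le_of_lt hx)), (exp_pos _).le, mul_comm]

lemma map_eq_expMeasure_one {Ω : Type*} [MeasurableSpace Ω] {P : Measure Ω}
    [IsProbabilityMeasure P] {X : Ω → ℝ} (hX : Measurable X) (hX0 : ∀ ω, 0 ≤ X ω)
    (htail : ∀ v, 0 ≤ v → P (X ⁻¹' Ici v) = ENNReal.ofReal (exp (-v))) :
    P.map X = expMeasure 1 := by
  have := isProbabilityMeasure_expMeasure one_pos
  refine Measure.ext_of_Ici _ _ fun a => ?_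
  rw [Measure.map_apply hX measurableSet_Ici]
  rcases le_or_gt 0 a with ha | ha
  · rw [htail a ha, expMeasure_one_Ici ha]
  · rw [(eq_univ_of_forall fun ω => ha.le.trans (hX0 ω) : X ⁻¹' Ici a = univ), measure_univ]
    refine le_antisymm ?_ prob_le_one
    calc (1 : ℝ≥0∞) = expMeasure 1 (Ici 0) := by simp [expMeasure_one_Ici le_rfl]
      _ ≤ expMeasure 1 (Ici a) := measure_mono (Ici_subset_Ici.2 ha.le)

lemma setIntegral_rpow_of_tail_eq_exp {Ω : Type*} [MeasurableSpace Ω] {P : Measure Ω}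
    [IsProbabilityMeasure P] {W : Ω → ℝ} (hW : Measurable W) (hW0 : ∀ ω, 0 ≤ W ω) {q : ℝ}
    (hq : 0 < q) (hlaw : ∀ v : ℝ, 0 ≤ v → P {ω | v ^ q ≤ W ω} = ENNReal.ofReal (exp (-v)))
    {u : ℝ} (hu : 0 ≤ u) (s : ℝ) :
    ∫ ω in {ω | u ^ q ≤ W ω}, W ω ^ s ∂P = ∫ x in Ioi u, x ^ (q * s) * exp (-x) := by
  set X : Ω → ℝ := fun ω => W ω ^ q⁻¹
  have hX : Measurable X := by fun_prop
  have hX0 : ∀ ω, 0 ≤ X ω := fun ω => rpow_nonneg (hW0 ω) _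
  have hpre : ∀ v, 0 ≤ v → {ω | v ^ q ≤ W ω} = X ⁻¹' Ici v := fun v hv => by
    ext ω; exact (le_rpow_inv_iff_of_pos hv (hW0 ω) hq).symm
  have hmap : P.map X = expMeasure 1 :=
    map_eq_expMeasure_one hX hX0 fun v hv => hpre v hv ▸ hlaw v hv
  have hWX : ∀ ω, W ω ^ s = X ω ^ (q * s) := fun ω => by
    rw [rpow_mul (hX0 ω), ← rpow_mul (hW0 ω), inv_mul_cancel₀ hq.ne', rpow_one]
  calc ∫ ω in {ω | u ^ q ≤ W ω}, W ω ^ s ∂P = ∫ ω in X ⁻¹' Ici u, X ω ^ (q * s) ∂P := by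
        simp_rw [hpre u hu, hWX]
    _ = ∫ x in Ici u, x ^ (q * s) ∂P.map X :=
        (setIntegral_map (f := fun x : ℝ => x ^ (q * s)) measurableSet_Ici
          (by fun_prop) hX.aemeasurable).symm
    _ = ∫ x in Ioi u, x ^ (q * s) * exp (-x) := by rw [hmap, setIntegral_expMeasure_one_Ici hu]

/-- Moment bounds for the tail of a random variable with subpolynomial tails:
if `P(W ≥ u^q) = e^{-u}` for all `u ≥ 0`, then for `u ≥ 1`,
`E[W 1_{W ≥ u^q}] ≤ 2 u^q e^{-u}` and `E[W² 1_{W ≥ u^q}] ≤ 5 u^{2q} e^{-u}`. -/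
theorem stmt0 {Ω : Type*} [MeasurableSpace Ω] (P : Measure Ω) [IsProbabilityMeasure P]
    (W : Ω → ℝ) (hWmeas : Measurable W) (hWnn : ∀ ω, 0 ≤ W ω)
    (q : ℝ) (hq0 : 0 < q) (hq1 : q ≤ 1)
    (hlaw : ∀ u : ℝ, 0 ≤ u → P {ω | u ^ q ≤ W ω} = ENNReal.ofReal (Real.exp (-u))) :
    ∀ u : ℝ, 1 ≤ u →
      (∫ ω in {ω | u ^ q ≤ W ω}, W ω ∂P) ≤ 2 * u ^ q * Real.exp (-u) ∧
      (∫ ω in {ω | u ^ q ≤ W ω}, (W ω) ^ 2 ∂P) ≤ 5 * u ^ (2 * q) * Real.exp (-u) := by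
  intro u hu
  have hmoment := setIntegral_rpow_of_tail_eq_exp hWmeas hWnn hq0 hlaw (zero_le_one.trans hu)
  constructor
  · calc ∫ ω in {ω | u ^ q ≤ W ω}, W ω ∂P = ∫ x in Ioi u, x ^ q * exp (-x) := by
          simpa using hmoment 1
      _ ≤ 2 * u ^ q * exp (-u) := by
          refine (setIntegral_Ioi_rpow_mul_exp_neg_le (n := 1) hu hq0.le
            (by simpa using hq1)).trans_eq ?_
          norm_num [sum_range_succ]
  · calc ∫ ω in {ω | u ^ q ≤ W ω}, W ω ^ 2 ∂P = ∫ x in Ioi u, x ^ (2 * q) * exp (-x) := by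
          simpa [mul_comm] using hmoment 2
      _ ≤ 5 * u ^ (2 * q) * exp (-u) := by
          refine (setIntegral_Ioi_rpow_mul_exp_neg_le (n := 2) (p := 2 * q) hu (by positivity)
            (by push_cast; linarith)).trans_eq ?_
          norm_num [sum_range_succ]
end

section
/- Let (𝒴, 𝒜, λ) be a probability space and f : 𝒴 → [0,∞) a measurable function with ∫ f dλ = 1. Let μ be the measure with density f with respect to λ. Let δ > 0 and suppose M := ∫ f^{1+δ} dλ < ∞. Then M ≥ 1; for every u ≥ 1, μ{ y : f(y) ≥ exp( ((1 + log M)/δ) · u ) } ≤ e^{−u}; and for every u ≥ 0, μ{ y : f(y) ≤ e^{−u} } ≤ e^{−u}. -/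
/-!
Jensen's inequality for `x ↦ x ^ (1 + δ)` gives `M ≥ 1`. Under `μ = f·λ`, Markov's inequality
for `f ^ δ` gives `μ {t ≤ f} ≤ t ^ (-δ) ∫ f ^ δ dμ = M / t ^ δ`; at `t = exp ((1 + log M) u / δ)`
this is `exp (log M - (1 + log M) u) ≤ exp (-u)` once `u ≥ 1`. The lower tail is trivial:
`μ {f ≤ s} = ∫_{f ≤ s} f dλ ≤ s`.
-/

open MeasureTheory Real

section
variable {Y : Type*} [MeasurableSpace Y] (lam : Measure Y) {f : Y → ℝ}

theorem one_le_integral_rpow_of_integral_eq_one [IsProbabilityMeasure lam]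
    (hfnn : ∀ y, 0 ≤ f y) (hfint : ∫ y, f y ∂lam = 1) {p : ℝ} (hp : 1 ≤ p)
    (hfp : Integrable (fun y => f y ^ p) lam) : 1 ≤ ∫ y, f y ^ p ∂lam := by
  have hfi : Integrable f lam := Integrable.of_integral_ne_zero (by simp [hfint])
  have jensen := (convexOn_rpow hp).map_integral_le
    (continuous_rpow_const (by linarith)).continuousOn isClosed_Ici
    (ae_of_all _ hfnn) hfi hfp
  simpa [hfint] using jensen

theorem rpow_mul_withDensity_le_lintegral_rpow (hf : Measurable f) (hfnn : ∀ y, 0 ≤ f y)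
    {δ t : ℝ} (hδ : 0 ≤ δ) (ht : 0 ≤ t) :
    ENNReal.ofReal (t ^ δ) * lam.withDensity (fun y => ENNReal.ofReal (f y)) {y | t ≤ f y}
      ≤ ∫⁻ y, ENNReal.ofReal (f y ^ (1 + δ)) ∂lam := by
  set ν := lam.withDensity (fun y => ENNReal.ofReal (f y))
  calc ENNReal.ofReal (t ^ δ) * ν {y | t ≤ f y}
      ≤ ENNReal.ofReal (t ^ δ) * ν {y | ENNReal.ofReal (t ^ δ) ≤ ENNReal.ofReal (f y ^ δ)} :=
        mul_le_mul_right (measure_mono fun y (hy : t ≤ f y) =>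
          ENNReal.ofReal_le_ofReal (rpow_le_rpow ht hy hδ)) _
    _ ≤ ∫⁻ y, ENNReal.ofReal (f y ^ δ) ∂ν := mul_meas_ge_le_lintegral₀ (by fun_prop) _
    _ = ∫⁻ y, ENNReal.ofReal (f y ^ (1 + δ)) ∂lam := by
        rw [lintegral_withDensity_eq_lintegral_mul _ hf.ennreal_ofReal (by fun_prop)]
        congr 1 with y
        rw [Pi.mul_apply, ← ENNReal.ofReal_mul (hfnn y), rpow_add' (hfnn y) (by linarith),
          rpow_one]

theorem withDensity_setOf_le_le_div_rpow (hf : Measurable f) (hfnn : ∀ y, 0 ≤ f y)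
    {δ t : ℝ} (hδ : 0 ≤ δ) (ht : 0 < t) (hfδ : Integrable (fun y => f y ^ (1 + δ)) lam) :
    lam.withDensity (fun y => ENNReal.ofReal (f y)) {y | t ≤ f y}
      ≤ ENNReal.ofReal ((∫ y, f y ^ (1 + δ) ∂lam) / t ^ δ) := by
  have htδ : 0 < t ^ δ := rpow_pos_of_pos ht δ
  rw [ENNReal.ofReal_div_of_pos htδ, ENNReal.le_div_iff_mul_le (by simp [htδ]) (by simp),
    mul_comm, ofReal_integral_eq_lintegral_ofReal hfδ
      (ae_of_all _ fun y => rpow_nonneg (hfnn y) _)]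
  exact rpow_mul_withDensity_le_lintegral_rpow lam hf hfnn hδ ht.le

theorem withDensity_setOf_le_le_ofReal [IsZeroOrProbabilityMeasure lam] (s : ℝ) :
    lam.withDensity (fun y => ENNReal.ofReal (f y)) {y | f y ≤ s} ≤ ENNReal.ofReal s := by
  rw [withDensity_apply']
  calc ∫⁻ y in {y | f y ≤ s}, ENNReal.ofReal (f y) ∂lam
      ≤ ∫⁻ _ in {y | f y ≤ s}, ENNReal.ofReal s ∂lam :=
        setLIntegral_mono measurable_const fun y hy => ENNReal.ofReal_le_ofReal hy
    _ = ENNReal.ofReal s * lam {y | f y ≤ s} := setLIntegral_const _ _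
    _ ≤ ENNReal.ofReal s := mul_le_of_le_one_right' prob_le_one

end

theorem div_exp_rpow_le_exp_neg {M u δ : ℝ} (hM : 1 ≤ M) (hu : 1 ≤ u) (hδ : 0 < δ) :
    M / exp ((1 + log M) / δ * u) ^ δ ≤ exp (-u) := by
  have hL : 0 ≤ log M := log_nonneg hM
  rw [← exp_mul, mul_right_comm, div_mul_cancel₀ _ hδ.ne', div_le_iff₀ (exp_pos _), ← exp_add]
  calc M = exp (log M) := (exp_log (by linarith)).symm
    _ ≤ exp (-u + (1 + log M) * u) := exp_le_exp.mpr (by nlinarith)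

/-- If `λ` is a probability measure, `f ≥ 0` is a probability density with respect to `λ`,
`μ = f·λ`, and `M = ∫ f^{1+δ} dλ < ∞` for some `δ > 0`, then `M ≥ 1`, the density has
subpolynomial upper tails under `μ` with constant `(1 + log M)/δ`, and subpolynomial
lower tails. -/
theorem stmt1 {Y : Type*} [MeasurableSpace Y] (lam : Measure Y) [IsProbabilityMeasure lam]
    (f : Y → ℝ) (hf : Measurable f) (hfnn : ∀ y, 0 ≤ f y)
    (hfint : ∫ y, f y ∂lam = 1)
    (δ : ℝ) (hδ : 0 < δ)
    (hM : Integrable (fun y => f y ^ (1 + δ)) lam) :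
    1 ≤ ∫ y, f y ^ (1 + δ) ∂lam ∧
    (∀ u : ℝ, 1 ≤ u →
      lam.withDensity (fun y => ENNReal.ofReal (f y))
          {y | Real.exp ((1 + Real.log (∫ y, f y ^ (1 + δ) ∂lam)) / δ * u) ≤ f y}
        ≤ ENNReal.ofReal (Real.exp (-u))) ∧
    (∀ u : ℝ, 0 ≤ u →
      lam.withDensity (fun y => ENNReal.ofReal (f y)) {y | f y ≤ Real.exp (-u)}
        ≤ ENNReal.ofReal (Real.exp (-u))) := by
  have hM1 := one_le_integral_rpow_of_integral_eq_one lam hfnn hfint (by linarith) hM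
  refine ⟨hM1, fun u hu => ?_, fun u _ => withDensity_setOf_le_le_ofReal lam _⟩
  exact (withDensity_setOf_le_le_div_rpow lam hf hfnn hδ.le (exp_pos _) hM).trans
    (ENNReal.ofReal_le_ofReal (div_exp_rpow_le_exp_neg hM1 hu hδ))
end

section
/- Let K ≥ 1 be an integer, σ ∈ (0,1], 𝒴 a measurable space, π : Fin K → ℝ a probability vector with π(x) ≥ σ for all x, Q : Fin K × Fin K → ℝ a row-stochastic matrix with Q(x,x') ≥ σ for all x, x', and γ_x : 𝒴 → [0,∞) for each x ∈ Fin K. Then for every k ≥ 1 and all y₁,…,y_k ∈ 𝒴 such that p_{k−1}(y₁,…,y_{k−1}) > 0, one has σ · (Σ_{x ∈ Fin K} γ_x(y_k)) · p_{k−1}(y₁,…,y_{k−1}) ≤ p_k(y₁,…,y_k) ≤ (Σ_{x ∈ Fin K} γ_x(y_k)) · p_{k−1}(y₁,…,y_{k−1}). -/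
/-!
Splitting off the last hidden state, `p_k = Σ_z w(z) · Σ_j γ_j(y_k) r_z(j)`, where `z` runs over
hidden paths of length `k - 1` with nonnegative weights `w(z)` summing to `p_{k-1}`, and `r_z` is
`π` when `k = 1` and the row `Q(z_{k-1}, ·)` otherwise. Being a probability vector bounded below
by `σ`, each `r_z` takes values in `[σ, 1]`, so every inner sum lies in `[σ Σ_j γ_j(y_k), Σ_j γ_j(y_k)]`,
and averaging against `w` gives the claim.
-/

open Finset

/-- The sum-product density of a hidden Markov model with `K` hidden states,
initial distribution `π`, transition matrix `Q` and emission densities `γ`: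
`p_m(y₁,…,y_m) = Σ_{x₁,…,x_m} π(x₁) Π_{i=1}^{m-1} Q(x_i,x_{i+1}) Π_{i=1}^m γ_{x_i}(y_i)`,
with the convention `p₀ = 1`. Observations are indexed from `0`, so `y_i = y (i-1)`. -/
noncomputable def sumProdDensity {Y : Type*} (K : ℕ) (piv : Fin K → ℝ)
    (Q : Fin K → Fin K → ℝ) (γ : Fin K → Y → ℝ) (y : ℕ → Y) : ℕ → ℝ
  | 0 => 1
  | (m + 1) =>
      ∑ x : Fin (m + 1) → Fin K,
        piv (x 0) * (∏ i : Fin m, Q (x i.castSucc) (x i.succ)) *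
          (∏ i : Fin (m + 1), γ (x i) (y i))

lemma sum_mul_mem_Icc {ι : Type*} [Fintype ι] {w a : ι → ℝ} {L U : ℝ} (hw : ∀ i, 0 ≤ w i)
    (ha : ∀ i, a i ∈ Set.Icc L U) :
    ∑ i, w i * a i ∈ Set.Icc (L * ∑ i, w i) (U * ∑ i, w i) := by
  rw [mul_sum, mul_sum]
  exact ⟨sum_le_sum fun i _ => mul_comm L (w i) ▸ mul_le_mul_of_nonneg_left (ha i).1 (hw i),
    sum_le_sum fun i _ => mul_comm U (w i) ▸ mul_le_mul_of_nonneg_left (ha i).2 (hw i)⟩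

lemma le_one_of_sum_eq_one {ι : Type*} [Fintype ι] {v : ι → ℝ} (hv : ∀ i, 0 ≤ v i)
    (hsum : ∑ i, v i = 1) (i : ι) : v i ≤ 1 :=
  hsum ▸ single_le_sum (fun j _ => hv j) (mem_univ i)

section SumProdDensity

variable {Y : Type*} {K : ℕ} (piv : Fin K → ℝ) (Q : Fin K → Fin K → ℝ) (γ : Fin K → Y → ℝ)
  (y : ℕ → Y)

def pathWeight {m : ℕ} (x : Fin (m + 1) → Fin K) : ℝ :=
  piv (x 0) * (∏ i : Fin m, Q (x i.castSucc) (x i.succ)) * ∏ i : Fin (m + 1), γ (x i) (y i)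

lemma sumProdDensity_zero : sumProdDensity K piv Q γ y 0 = 1 :=
  rfl

lemma sumProdDensity_succ (m : ℕ) :
    sumProdDensity K piv Q γ y (m + 1) = ∑ x : Fin (m + 1) → Fin K, pathWeight piv Q γ y x :=
  rfl

lemma sumProdDensity_one : sumProdDensity K piv Q γ y 1 = ∑ j, γ j (y 0) * piv j := by
  rw [sumProdDensity_succ, ← (Equiv.funUnique (Fin 1) (Fin K)).symm.sum_comp]
  simp [pathWeight, mul_comm]

lemma pathWeight_snoc {m : ℕ} (z : Fin (m + 1) → Fin K) (j : Fin K) :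
    pathWeight piv Q γ y (Fin.snoc z j : Fin (m + 2) → Fin K) =
      pathWeight piv Q γ y z * (γ j (y (m + 1)) * Q (z (Fin.last m)) j) := by
  have h0 : (Fin.snoc z j : Fin (m + 2) → Fin K) 0 = z 0 := Fin.snoc_castSucc (i := 0) ..
  rw [pathWeight, pathWeight, Fin.prod_univ_castSucc (n := m), Fin.prod_univ_castSucc (n := m + 1)]
  simp only [h0, Fin.snoc_castSucc, Fin.succ_castSucc, Fin.succ_last, Fin.snoc_last,
    Fin.val_castSucc, Fin.val_last]
  ring

lemma sumProdDensity_succ_succ (m : ℕ) :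
    sumProdDensity K piv Q γ y (m + 2) =
      ∑ z : Fin (m + 1) → Fin K,
        pathWeight piv Q γ y z * ∑ j, γ j (y (m + 1)) * Q (z (Fin.last m)) j := by
  rw [sumProdDensity_succ, ← (Fin.snocEquiv fun _ => Fin K).sum_comp,
    Fintype.sum_prod_type_right]
  refine sum_congr rfl fun z _ => ?_
  rw [mul_sum]
  exact sum_congr rfl fun j _ => pathWeight_snoc piv Q γ y z j

variable {piv Q γ}

lemma pathWeight_nonneg (hpiv : ∀ x, 0 ≤ piv x) (hQ : ∀ x x', 0 ≤ Q x x')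
    (hγ : ∀ x y, 0 ≤ γ x y) {m : ℕ} (x : Fin (m + 1) → Fin K) : 0 ≤ pathWeight piv Q γ y x :=
  mul_nonneg (mul_nonneg (hpiv _) (prod_nonneg fun _ _ => hQ _ _)) (prod_nonneg fun _ _ => hγ _ _)

end SumProdDensity

theorem stmt2_general {Y : Type*} (K : ℕ) (σ : ℝ) (hσ0 : 0 < σ)
    (piv : Fin K → ℝ) (hpivsum : ∑ x, piv x = 1) (hpivσ : ∀ x, σ ≤ piv x)
    (Q : Fin K → Fin K → ℝ) (hQnn : ∀ x x', 0 ≤ Q x x')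
    (hQsum : ∀ x, ∑ x', Q x x' = 1) (hQσ : ∀ x x', σ ≤ Q x x')
    (γ : Fin K → Y → ℝ) (hγ : ∀ x y, 0 ≤ γ x y)
    (k : ℕ) (hk : 1 ≤ k) (y : ℕ → Y) :
    σ * (∑ x, γ x (y (k - 1))) * sumProdDensity K piv Q γ y (k - 1)
        ≤ sumProdDensity K piv Q γ y k ∧
      sumProdDensity K piv Q γ y k
        ≤ (∑ x, γ x (y (k - 1))) * sumProdDensity K piv Q γ y (k - 1) := by
  have hpivnn x : 0 ≤ piv x := hσ0.le.trans (hpivσ x)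
  have hpivIcc x : piv x ∈ Set.Icc σ 1 := ⟨hpivσ x, le_one_of_sum_eq_one hpivnn hpivsum x⟩
  have hQIcc x x' : Q x x' ∈ Set.Icc σ 1 := ⟨hQσ x x', le_one_of_sum_eq_one (hQnn x) (hQsum x) x'⟩
  obtain ⟨n, rfl⟩ := Nat.exists_eq_add_of_le' hk
  rw [Nat.add_sub_cancel, ← Set.mem_Icc]
  cases n with
  | zero =>
    rw [sumProdDensity_one, sumProdDensity_zero, mul_one, mul_one]
    simpa only [one_mul] using sum_mul_mem_Icc (hγ · (y 0)) hpivIcc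
  | succ m =>
    rw [sumProdDensity_succ_succ, sumProdDensity_succ]
    refine sum_mul_mem_Icc (pathWeight_nonneg y hpivnn hQnn hγ) fun z => ?_
    simpa only [one_mul] using sum_mul_mem_Icc (hγ · (y (m + 1))) (hQIcc (z (Fin.last m)))

/-- Bounds for the one-step ratio of HMM densities: if the initial distribution and the
transition matrix are bounded below by `σ`, then
`σ (Σ_x γ_x(y_k)) p_{k-1} ≤ p_k ≤ (Σ_x γ_x(y_k)) p_{k-1}`. -/
theorem stmt2 {Y : Type*} (K : ℕ) (hK : 1 ≤ K) (σ : ℝ) (hσ0 : 0 < σ) (hσ1 : σ ≤ 1)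
    (piv : Fin K → ℝ) (hpivsum : ∑ x, piv x = 1) (hpivσ : ∀ x, σ ≤ piv x)
    (Q : Fin K → Fin K → ℝ) (hQnn : ∀ x x', 0 ≤ Q x x')
    (hQsum : ∀ x, ∑ x', Q x x' = 1) (hQσ : ∀ x x', σ ≤ Q x x')
    (γ : Fin K → Y → ℝ) (hγ : ∀ x y, 0 ≤ γ x y)
    (k : ℕ) (hk : 1 ≤ k) (y : ℕ → Y)
    (hpos : 0 < sumProdDensity K piv Q γ y (k - 1)) :
    σ * (∑ x, γ x (y (k - 1))) * sumProdDensity K piv Q γ y (k - 1)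
        ≤ sumProdDensity K piv Q γ y k ∧
      sumProdDensity K piv Q γ y k
        ≤ (∑ x, γ x (y (k - 1))) * sumProdDensity K piv Q γ y (k - 1) :=
  stmt2_general K σ hσ0 piv hpivsum hpivσ Q hQnn hQsum hQσ γ hγ k hk y
end

section
/- Let λ be a measure on a measurable space 𝒴, S a finite set, (p_x)_{x ∈ S} and (p*_x)_{x ∈ S} probability vectors on S, and for each x ∈ S let g_x, g*_x : 𝒴 → [0,∞) be measurable functions with ∫ g_x dλ = 1 and ∫ g*_x dλ = 1. Then ∫ ( √(Σ_{x ∈ S} p*_x g*_x(y)) − √(Σ_{x ∈ S} p_x g_x(y)) )² dλ(y) ≤ 2 Σ_{x ∈ S} ∫ ( √(g*_x(y)) − √(g_x(y)) )² dλ(y) + 2 Σ_{x ∈ S} ( √(p*_x) − √(p_x) )². -/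
/-!
Insert the intermediate mixture `∑ₓ pₓ g*ₓ`, which has the weights of one mixture and the
components of the other. By `(a + b)² ≤ 2(a² + b²)` it suffices to bound the two resulting
Hellinger terms, and each is handled pointwise by the subadditivity
`(√(∑ aₓ) - √(∑ bₓ))² ≤ ∑ (√aₓ - √bₓ)²`, a form of Cauchy–Schwarz. Swapping the weights costs
`∑ (√p*ₓ - √pₓ)² g*ₓ`, which integrates to `∑ (√p*ₓ - √pₓ)²` since `∫ g*ₓ = 1`; swapping the
components costs `∑ pₓ (√g*ₓ - √gₓ)² ≤ ∑ (√g*ₓ - √gₓ)²` since `pₓ ≤ 1`.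
-/

open MeasureTheory Real Finset

lemma sq_sqrt_sum_sub_sqrt_sum_le {ι : Type*} (s : Finset ι) {a b : ι → ℝ}
    (ha : ∀ i, 0 ≤ a i) (hb : ∀ i, 0 ≤ b i) :
    (√(∑ i ∈ s, a i) - √(∑ i ∈ s, b i)) ^ 2 ≤ ∑ i ∈ s, (√(a i) - √(b i)) ^ 2 := by
  have hA : 0 ≤ ∑ i ∈ s, a i := sum_nonneg fun i _ => ha i
  have hB : 0 ≤ ∑ i ∈ s, b i := sum_nonneg fun i _ => hb i
  have expand : ∀ i, (√(a i) - √(b i)) ^ 2 = a i + b i - 2 * (√(a i) * √(b i)) := by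
    intro i
    rw [sub_sq, sq_sqrt (ha i), sq_sqrt (hb i)]
    ring
  rw [sum_congr rfl fun i _ => expand i, sum_sub_distrib, sum_add_distrib, ← mul_sum, sub_sq,
    sq_sqrt hA, sq_sqrt hB]
  linarith [sum_sqrt_mul_sqrt_le s ha hb]

lemma sq_sqrt_sub_sqrt_le_add {u v : ℝ} (hu : 0 ≤ u) (hv : 0 ≤ v) : (√u - √v) ^ 2 ≤ u + v := by
  rw [sub_sq, sq_sqrt hu, sq_sqrt hv]
  nlinarith [sqrt_nonneg u, sqrt_nonneg v]

lemma sq_sqrt_mixture_sub_sqrt_mixture_le {S : Type*} [Fintype S] {p pstar c cstar : S → ℝ}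
    (hp : ∀ x, 0 ≤ p x) (hps : ∀ x, 0 ≤ pstar x) (hp_le_one : ∀ x, p x ≤ 1)
    (hc : ∀ x, 0 ≤ c x) (hcs : ∀ x, 0 ≤ cstar x) :
    (√(∑ x, pstar x * cstar x) - √(∑ x, p x * c x)) ^ 2
      ≤ 2 * ∑ x, (√(cstar x) - √(c x)) ^ 2
        + 2 * ∑ x, (√(pstar x) - √(p x)) ^ 2 * cstar x := by
  have swap_weights : (√(∑ x, pstar x * cstar x) - √(∑ x, p x * cstar x)) ^ 2
      ≤ ∑ x, (√(pstar x) - √(p x)) ^ 2 * cstar x := by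
    refine (sq_sqrt_sum_sub_sqrt_sum_le univ (fun x => mul_nonneg (hps x) (hcs x))
      (fun x => mul_nonneg (hp x) (hcs x))).trans_eq (sum_congr rfl fun x _ => ?_)
    rw [sqrt_mul (hps x), sqrt_mul (hp x), ← sub_mul, mul_pow, sq_sqrt (hcs x)]
  have swap_components : (√(∑ x, p x * cstar x) - √(∑ x, p x * c x)) ^ 2
      ≤ ∑ x, (√(cstar x) - √(c x)) ^ 2 := by
    refine (sq_sqrt_sum_sub_sqrt_sum_le univ (fun x => mul_nonneg (hp x) (hcs x))
      (fun x => mul_nonneg (hp x) (hc x))).trans (sum_le_sum fun x _ => ?_)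
    rw [sqrt_mul (hp x), sqrt_mul (hp x), ← mul_sub, mul_pow, sq_sqrt (hp x)]
    exact mul_le_of_le_one_left (sq_nonneg _) (hp_le_one x)
  calc _ = ((√(∑ x, pstar x * cstar x) - √(∑ x, p x * cstar x))
          + (√(∑ x, p x * cstar x) - √(∑ x, p x * c x))) ^ 2 := by ring
    _ ≤ 2 * ((√(∑ x, pstar x * cstar x) - √(∑ x, p x * cstar x)) ^ 2
          + (√(∑ x, p x * cstar x) - √(∑ x, p x * c x)) ^ 2) := add_sq_le
    _ ≤ _ := by linarith

lemma integrable_sq_sqrt_sub_sqrt {Y : Type*} [MeasurableSpace Y] {μ : Measure Y} {f g : Y → ℝ}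
    (hf : Integrable f μ) (hg : Integrable g μ) (hf0 : ∀ y, 0 ≤ f y) (hg0 : ∀ y, 0 ≤ g y) :
    Integrable (fun y => (√(f y) - √(g y)) ^ 2) μ := by
  refine (hf.add hg).mono' ?_ (ae_of_all _ fun y => ?_)
  · exact (continuous_sqrt.comp_aestronglyMeasurable hf.aestronglyMeasurable).sub
      (continuous_sqrt.comp_aestronglyMeasurable hg.aestronglyMeasurable) |>.pow 2
  · rw [norm_of_nonneg (sq_nonneg _)]
    exact sq_sqrt_sub_sqrt_le_add (hf0 y) (hg0 y)

theorem stmt5_general {Y : Type*} [MeasurableSpace Y] (lam : Measure Y)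
    {S : Type*} [Fintype S]
    (p pstar : S → ℝ) (hp : ∀ x, 0 ≤ p x) (hps : ∀ x, 0 ≤ pstar x)
    (hpsum : ∑ x, p x = 1)
    (g gstar : S → Y → ℝ)
    (hgnn : ∀ x y, 0 ≤ g x y) (hgsnn : ∀ x y, 0 ≤ gstar x y)
    (hgint : ∀ x, ∫ y, g x y ∂lam = 1) (hgsint : ∀ x, ∫ y, gstar x y ∂lam = 1) :
    ∫ y, (Real.sqrt (∑ x, pstar x * gstar x y) - Real.sqrt (∑ x, p x * g x y)) ^ 2 ∂lam
      ≤ 2 * ∑ x, ∫ y, (Real.sqrt (gstar x y) - Real.sqrt (g x y)) ^ 2 ∂lam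
        + 2 * ∑ x, (Real.sqrt (pstar x) - Real.sqrt (p x)) ^ 2 := by
  have hp_le_one (x : S) : p x ≤ 1 :=
    hpsum ▸ single_le_sum (fun z _ => hp z) (mem_univ x)
  have hg_int (x : S) : Integrable (g x) lam := .of_integral_ne_zero (by simp [hgint x])
  have hgs_int (x : S) : Integrable (gstar x) lam := .of_integral_ne_zero (by simp [hgsint x])
  have hcomp_int (x : S) := integrable_sq_sqrt_sub_sqrt (hgs_int x) (hg_int x) (hgsnn x) (hgnn x)
  have hweight_int (x : S) := (hgs_int x).const_mul ((√(pstar x) - √(p x)) ^ 2)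
  have hcomp_sum_int := (integrable_finsetSum univ fun x _ => hcomp_int x).const_mul 2
  have hweight_sum_int := (integrable_finsetSum univ fun x _ => hweight_int x).const_mul 2
  calc _ ≤ ∫ y, 2 * ∑ x, (√(gstar x y) - √(g x y)) ^ 2
          + 2 * ∑ x, (√(pstar x) - √(p x)) ^ 2 * gstar x y ∂lam :=
        integral_mono_of_nonneg (ae_of_all _ fun y => sq_nonneg _)
          (hcomp_sum_int.add hweight_sum_int)
          (ae_of_all _ fun y => sq_sqrt_mixture_sub_sqrt_mixture_le hp hps hp_le_one
            (fun x => hgnn x y) (fun x => hgsnn x y))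
    _ = _ := by
        rw [integral_add hcomp_sum_int hweight_sum_int, integral_const_mul, integral_const_mul,
          integral_finsetSum _ fun x _ => hcomp_int x,
          integral_finsetSum _ fun x _ => hweight_int x]
        simp only [integral_const_mul, hgsint, mul_one]

/-- The squared Hellinger distance between two finite mixtures is controlled by the
squared Hellinger distances between the component densities and between the weight
vectors. -/
theorem stmt5 {Y : Type*} [MeasurableSpace Y] (lam : Measure Y)
    {S : Type*} [Fintype S]
    (p pstar : S → ℝ) (hp : ∀ x, 0 ≤ p x) (hps : ∀ x, 0 ≤ pstar x)
    (hpsum : ∑ x, p x = 1) (hpssum : ∑ x, pstar x = 1)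
    (g gstar : S → Y → ℝ) (hg : ∀ x, Measurable (g x)) (hgs : ∀ x, Measurable (gstar x))
    (hgnn : ∀ x y, 0 ≤ g x y) (hgsnn : ∀ x y, 0 ≤ gstar x y)
    (hgint : ∀ x, ∫ y, g x y ∂lam = 1) (hgsint : ∀ x, ∫ y, gstar x y ∂lam = 1) :
    ∫ y, (Real.sqrt (∑ x, pstar x * gstar x y) - Real.sqrt (∑ x, p x * g x y)) ^ 2 ∂lam
      ≤ 2 * ∑ x, ∫ y, (Real.sqrt (gstar x y) - Real.sqrt (g x y)) ^ 2 ∂lam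
        + 2 * ∑ x, (Real.sqrt (pstar x) - Real.sqrt (p x)) ^ 2 :=
  stmt5_general lam p pstar hp hps hpsum g gstar hgnn hgsnn hgint hgsint
end

section
/- Let λ be a measure on a measurable space 𝒴, S a finite set, and for each x ∈ S let γ_x, g_x : 𝒴 → [0,∞) be measurable functions. Then ∫ ( max_{x ∈ S} (γ_x(y) − g_x(y))² ) / ( max( Σ_{x ∈ S} γ_x(y), Σ_{x ∈ S} g_x(y) ) ) dλ(y) ≤ 4 Σ_{x ∈ S} ∫ ( √(γ_x(y)) − √(g_x(y)) )² dλ(y), where the integrand on the left is taken to be 0 at points where both sums vanish (convention 0/0 = 0). -/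
open MeasureTheory Real Finset
open scoped ENNReal

/- Pointwise, `(γ_x - g_x)² = (√γ_x + √g_x)² (√γ_x - √g_x)²` and
`(√γ_x + √g_x)² ≤ 2 (γ_x + g_x) ≤ 4 max (Σ γ, Σ g)`, so every term of the maximum, divided by the
denominator, is at most `4 (√γ_x - √g_x)²` and hence at most `4 Σ_x (√γ_x - √g_x)²`. -/

lemma sq_sub_le_four_mul_mul_sq_sqrt_sub {a b M : ℝ} (ha : 0 ≤ a) (hb : 0 ≤ b)
    (haM : a ≤ M) (hbM : b ≤ M) :
    (a - b) ^ 2 ≤ 4 * M * (√a - √b) ^ 2 := by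
  have hsum : (√a + √b) ^ 2 ≤ 4 * M := by
    nlinarith [sq_nonneg (√a - √b), sq_sqrt ha, sq_sqrt hb]
  calc (a - b) ^ 2 = (√a + √b) ^ 2 * (√a - √b) ^ 2 := by
        rw [← mul_pow, ← sq_sub_sq, sq_sqrt ha, sq_sqrt hb]
    _ ≤ 4 * M * (√a - √b) ^ 2 := by gcongr

lemma sup'_sq_sub_div_max_sum_le {ι : Type*} (s : Finset ι) (hs : s.Nonempty) {a b : ι → ℝ}
    (ha : ∀ i ∈ s, 0 ≤ a i) (hb : ∀ i ∈ s, 0 ≤ b i) :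
    (s.sup' hs fun i => (a i - b i) ^ 2) / max (∑ i ∈ s, a i) (∑ i ∈ s, b i)
      ≤ 4 * ∑ i ∈ s, (√(a i) - √(b i)) ^ 2 := by
  set M := max (∑ i ∈ s, a i) (∑ i ∈ s, b i)
  have hM : 0 ≤ M := le_max_of_le_left (sum_nonneg ha)
  refine div_le_of_le_mul₀ hM (by positivity) (sup'_le _ _ fun i hi => ?_)
  have hsq : (√(a i) - √(b i)) ^ 2 ≤ ∑ j ∈ s, (√(a j) - √(b j)) ^ 2 :=
    single_le_sum (f := fun j => (√(a j) - √(b j)) ^ 2) (fun j _ => sq_nonneg _) hi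
  calc (a i - b i) ^ 2 ≤ 4 * M * (√(a i) - √(b i)) ^ 2 :=
        sq_sub_le_four_mul_mul_sq_sqrt_sub (ha i hi) (hb i hi)
          ((single_le_sum ha hi).trans (le_max_left _ _))
          ((single_le_sum hb hi).trans (le_max_right _ _))
    _ ≤ 4 * (∑ j ∈ s, (√(a j) - √(b j)) ^ 2) * M := by
        rw [mul_right_comm]; gcongr

/-- `∫ (max_x (γ_x - g_x)²) / (max(Σ_x γ_x, Σ_x g_x)) dλ ≤ 4 Σ_x ∫ (√γ_x - √g_x)² dλ`,
with the convention `0/0 = 0` (which is Lean's convention for division by zero). -/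
theorem stmt6 {Y : Type*} [MeasurableSpace Y] (lam : Measure Y)
    {S : Type*} [Fintype S] [Nonempty S]
    (γ g : S → Y → ℝ) (hγ : ∀ x, Measurable (γ x)) (hg : ∀ x, Measurable (g x))
    (hγnn : ∀ x y, 0 ≤ γ x y) (hgnn : ∀ x y, 0 ≤ g x y) :
    ∫⁻ y, ENNReal.ofReal
        ((Finset.univ.sup' Finset.univ_nonempty fun x => (γ x y - g x y) ^ 2)
          / max (∑ x, γ x y) (∑ x, g x y)) ∂lam
      ≤ 4 * ∑ x, ∫⁻ y, ENNReal.ofReal ((Real.sqrt (γ x y) - Real.sqrt (g x y)) ^ 2) ∂lam := by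
  have hmeas : ∀ x, Measurable fun y => ENNReal.ofReal ((√(γ x y) - √(g x y)) ^ 2) := fun x =>
    ENNReal.measurable_ofReal.comp ((((hγ x).sqrt).sub (hg x).sqrt).pow_const 2)
  calc _ ≤ ∫⁻ y, ENNReal.ofReal (4 * ∑ x, (√(γ x y) - √(g x y)) ^ 2) ∂lam :=
        lintegral_mono fun y => ENNReal.ofReal_le_ofReal <| sup'_sq_sub_div_max_sum_le _ _
          (fun x _ => hγnn x y) (fun x _ => hgnn x y)
    _ = ∫⁻ y, 4 * ∑ x, ENNReal.ofReal ((√(γ x y) - √(g x y)) ^ 2) ∂lam := by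
        simp_rw [ENNReal.ofReal_mul zero_le_four,
          ENNReal.ofReal_sum_of_nonneg fun x _ => sq_nonneg (√(γ x _) - √(g x _)),
          ENNReal.ofReal_ofNat]
    _ = _ := by
        rw [lintegral_const_mul _ (by fun_prop), lintegral_finsetSum _ fun x _ => hmeas x]
end

section
/- Assume the bracketed sum-product setup with vectors u_j, v_j given for all j = 1,…,k, and suppose K ε ≤ 1/2 and K σ ≤ 1. Let a, b : Fin K → ℝ satisfy σ ≤ a(x) ≤ b(x) ≤ 1 and b(x) ≤ a(x) + ε for all x, and define ν(x) = a(x) α₀(x) / ( Σ_{x'} b(x') δ₀(x') ) and ω(x) = b(x) δ₀(x) / ( Σ_{x'} a(x') α₀(x') ). Then Σ_{x ∈ Fin K} |ν(x) − ω(x)| ≤ 5 (2/σ)^{k+1} ε. Moreover, for every 1 ≤ i ≤ k, defining f_i(x, x') = α_i(x') p(x,x') u_i(x') / ( Σ_{x''} δ_i(x'') q(x,x'') v_i(x'') ) and g_i(x, x') = δ_i(x') q(x,x') v_i(x') / ( Σ_{x''} α_i(x'') p(x,x'') u_i(x'') ), one has Σ_{x' ∈ Fin K} |f_i(x, x') −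 g_i(x, x')| ≤ 5 (2/σ)^{k−i+2} ε for every x ∈ Fin K. -/
open Finset Real

/-- The backward sum-product vector
`α_i(x) = Σ_{(x_{i+1},…,x_k) ∈ (Fin K)^{k-i}} Π_{j=i+1}^{k} p(x_{j−1}, x_j) u_j(x_j)`
with `x_i = x` (and the convention that the empty product equals `1` when `i = k`). -/
noncomputable def alphaVec (K k : ℕ) (p : Fin K → Fin K → ℝ) (u : ℕ → Fin K → ℝ)
    (i : ℕ) (x : Fin K) : ℝ :=
  ∑ z : Fin (k - i) → Fin K,
    ∏ j : Fin (k - i),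
      p (if (j : ℕ) = 0 then x else z ⟨(j : ℕ) - 1, lt_of_le_of_lt (Nat.sub_le _ _) j.isLt⟩)
          (z j) *
        u (i + 1 + (j : ℕ)) (z j)

/-!
Both `α_i` (built from `p, u`) and `δ_i` (built from `q, v`) satisfy the backward recursion
`A(x) = Σ_{x'} p(x,x') u(x') A'(x')`. Let `W_n` be the product of the total masses `Σ_x u_j(x)` over
the `n` steps. Induction on `n` gives `σ^n W_n ≤ A_n ≤ W_n` and `A_n ≤ B_n ≤ A_n + c_n W_n`, where
one step costs `c_{n+1} ≤ (1 + 2Kε) c_n + 3Kε ≤ 2 c_n + 3Kε`: the additive errors `ε e^{-D}` of the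
`v_j` are absorbed by the mass lower bound `Σ_x u_j(x) ≥ e^{-D} (1 - Kε) ≥ e^{-D} / 2`. Hence
`B_n ≤ (1 + c_n / σ^n) A_n` with `c_n = 3Kε (2^n - 1)`.

For `0 ≤ f ≤ g` with `Σ g ≤ ρ Σ f`, each term `f x / Σ g - g x / Σ f` is nonpositive, so the
bracket size is `Σ g / Σ f - Σ f / Σ g ≤ 2 (ρ - 1)`. This is applied to `f = a α₀, g = b δ₀`
(using `b ≤ (1 + ε/σ) a`) and to `f = α_i p(x,·) u_i, g = δ_i q(x,·) v_i`, whose sums are the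
vectors one step further back.
-/

noncomputable def backwardVec (K : ℕ) (p : Fin K → Fin K → ℝ) (u : ℕ → Fin K → ℝ)
    (n s : ℕ) (x : Fin K) : ℝ :=
  ∑ z : Fin n → Fin K,
    ∏ j : Fin n,
      p (if (j : ℕ) = 0 then x else z ⟨(j : ℕ) - 1, lt_of_le_of_lt (Nat.sub_le _ _) j.isLt⟩)
          (z j) *
        u (s + (j : ℕ)) (z j)

lemma alphaVec_eq_backwardVec (K k : ℕ) (p : Fin K → Fin K → ℝ) (u : ℕ → Fin K → ℝ) (i : ℕ) :
    alphaVec K k p u i = backwardVec K p u (k - i) (i + 1) := rfl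

noncomputable def massProd {K : ℕ} (u : ℕ → Fin K → ℝ) (n s : ℕ) : ℝ :=
  ∏ j ∈ range n, ∑ x, u (s + j) x

/-- The additive error `3Kε(2^n - 1) · massProd` of `backwardVec_le_add_massProd`, relative to the
lower bound `σ^n · massProd` of `pow_mul_massProd_le_backwardVec`. -/
noncomputable def backwardErr (κ σ ε : ℝ) (n : ℕ) : ℝ := 3 * κ * ε * (2 ^ n - 1) / σ ^ n

lemma Ico_add_one_subset_Ico (s n : ℕ) : Ico (s + 1) (s + 1 + n) ⊆ Ico s (s + (n + 1)) :=
  Ico_subset_Ico (by omega) (by omega)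

lemma mul_mul_le_mul_mul {a b c a' b' c' : ℝ} (ha : 0 ≤ a) (hb : 0 ≤ b) (hc : 0 ≤ c)
    (haa : a ≤ a') (hbb : b ≤ b') (hcc : c ≤ c') : a * b * c ≤ a' * b' * c' :=
  mul_le_mul (mul_le_mul haa hbb hb (ha.trans haa)) hcc hc
    (mul_nonneg (ha.trans haa) (hb.trans hbb))

/-- `q v B - p u A = q v (B - A) + (q v - p u) A`. -/
lemma mul_mul_le_mul_mul_add {p q u v A B W c ε E : ℝ} (hp : 0 ≤ p) (hpq : p ≤ q) (hq1 : q ≤ 1)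
    (hqp : q ≤ p + ε) (hu : 0 ≤ u) (huv : u ≤ v) (hvu : v ≤ u + ε * E) (hA : 0 ≤ A)
    (hAW : A ≤ W) (hAB : A ≤ B) (hBA : B ≤ A + c * W) :
    q * v * B ≤ p * u * A + (c * v + ε * (E + u)) * W := by
  have hv : 0 ≤ v := hu.trans huv
  have hqv : q * v - p * u ≤ ε * (E + u) := by nlinarith
  have hqv0 : 0 ≤ q * v - p * u := by nlinarith
  have h1 : q * v * (B - A) ≤ c * v * W := by
    nlinarith [mul_nonneg (mul_nonneg (sub_nonneg.2 hq1) hv) (sub_nonneg.2 hAB)]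
  have h2 : (q * v - p * u) * A ≤ ε * (E + u) * W := by
    nlinarith [mul_le_mul_of_nonneg_left hAW (hqv0.trans hqv)]
  linear_combination h1 + h2

lemma bracket_error_recursion {κ ε E U V y : ℝ} (hκ : 1 ≤ κ) (hε : 0 ≤ ε) (hκε : κ * ε ≤ 1 / 2)
    (hU : E * (1 - κ * ε) ≤ U) (hU0 : 0 ≤ U) (hV : V ≤ U + κ * (ε * E)) (hy : 1 ≤ y) :
    3 * κ * ε * (y - 1) * V + ε * (κ * E + U) ≤ 3 * κ * ε * (2 * y - 1) * U := by
  have hE : E ≤ 2 * U := by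
    rcases le_or_gt 0 E with h | h
    · nlinarith
    · linarith
  have hκε0 : 0 ≤ κ * ε := by positivity
  have hc : 0 ≤ 3 * κ * ε * (y - 1) := by nlinarith
  have h1 : 3 * κ * ε * (y - 1) * V ≤ 3 * κ * ε * (y - 1) * (U + κ * ε * (2 * U)) := by
    refine mul_le_mul_of_nonneg_left (hV.trans ?_) hc
    nlinarith [mul_le_mul_of_nonneg_left hE hκε0]
  have h2 : ε * (κ * E + U) ≤ κ * ε * (2 * U) + κ * ε * U := by
    nlinarith [mul_le_mul_of_nonneg_left hE hκε0,
      mul_le_mul_of_nonneg_right (le_mul_of_one_le_left hε hκ) hU0]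
  have h3 : 3 * κ * ε * (y - 1) * (κ * ε * (2 * U)) ≤ 3 * κ * ε * (y - 1) * U := by
    refine mul_le_mul_of_nonneg_left ?_ hc
    nlinarith
  nlinarith

section

variable {K : ℕ} {p q : Fin K → Fin K → ℝ} {u v : ℕ → Fin K → ℝ} {n s : ℕ}

@[simp]
lemma backwardVec_zero (s : ℕ) (x : Fin K) : backwardVec K p u 0 s x = 1 := by
  simp [backwardVec]

lemma backwardVec_succ (n s : ℕ) (x : Fin K) :
    backwardVec K p u (n + 1) s x =
      ∑ x', p x x' * u s x' * backwardVec K p u n (s + 1) x' := by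
  rw [backwardVec, ← (Fin.consEquiv fun _ : Fin (n + 1) => Fin K).sum_comp,
    Fintype.sum_prod_type]
  refine sum_congr rfl fun x' _ => ?_
  rw [backwardVec, mul_sum]
  refine sum_congr rfl fun z _ => ?_
  rw [Fin.prod_univ_succ]
  simp only [Fin.consEquiv_apply]
  congr 1
  refine prod_congr rfl fun ⟨j, hj⟩ _ => ?_
  cases j with
  | zero => rfl
  | succ m =>
    have h1 : ∀ h, (⟨m + 1 + 1, h⟩ : Fin (n + 1)) = Fin.succ ⟨m + 1, hj⟩ := fun _ => rfl
    have h2 : ∀ h, (⟨m + 1, h⟩ : Fin (n + 1)) = Fin.succ ⟨m, by omega⟩ := fun _ => rfl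
    simp only [Fin.succ_mk, Nat.add_sub_cancel]
    rw [if_neg (by omega), if_neg (by omega), h1, h2, Fin.cons_succ, Fin.cons_succ,
      show s + (m + 1 + 1) = s + 1 + (m + 1) by omega]

lemma sum_backwardVec_mul_mul (n s : ℕ) (x : Fin K) :
    ∑ x', backwardVec K p u n (s + 1) x' * p x x' * u s x' = backwardVec K p u (n + 1) s x := by
  rw [backwardVec_succ]
  exact sum_congr rfl fun x' _ => by ring

@[simp]
lemma massProd_zero (s : ℕ) : massProd u 0 s = 1 := prod_range_zero _

lemma massProd_succ (n s : ℕ) :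
    massProd u (n + 1) s = (∑ x, u s x) * massProd u n (s + 1) := by
  simp only [massProd, prod_range_succ', add_zero, add_assoc, add_comm 1, mul_comm]

lemma massProd_nonneg (hu : ∀ m ∈ Ico s (s + n), ∀ x, 0 ≤ u m x) : 0 ≤ massProd u n s :=
  prod_nonneg fun j hj =>
    sum_nonneg fun x _ => hu _ (by simp only [mem_range] at hj; simp only [mem_Ico]; omega) x

lemma massProd_pos (hu : ∀ m ∈ Ico s (s + n), 0 < ∑ x, u m x) : 0 < massProd u n s :=
  prod_pos fun j hj => hu _ (by simp only [mem_range] at hj; simp only [mem_Ico]; omega)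

lemma pow_mul_massProd_le_backwardVec {σ : ℝ} (hσ : 0 ≤ σ) (hσp : ∀ x x', σ ≤ p x x')
    (hu : ∀ m ∈ Ico s (s + n), ∀ x, 0 ≤ u m x) (x : Fin K) :
    σ ^ n * massProd u n s ≤ backwardVec K p u n s x := by
  induction n generalizing s x with
  | zero => simp
  | succ n ih =>
    have hu' := fun m hm => hu m (Ico_add_one_subset_Ico s n hm)
    rw [backwardVec_succ, massProd_succ, sum_mul, mul_sum]
    refine sum_le_sum fun x' _ => ?_
    calc σ ^ (n + 1) * (u s x' * massProd u n (s + 1))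
        = σ * u s x' * (σ ^ n * massProd u n (s + 1)) := by ring
      _ ≤ p x x' * u s x' * backwardVec K p u n (s + 1) x' :=
        mul_mul_le_mul_mul hσ (hu s (by simp) x')
          (mul_nonneg (pow_nonneg hσ n) (massProd_nonneg hu')) (hσp x x') le_rfl (ih hu' x')

lemma backwardVec_nonneg (hp : ∀ x x', 0 ≤ p x x') (hu : ∀ m ∈ Ico s (s + n), ∀ x, 0 ≤ u m x)
    (x : Fin K) : 0 ≤ backwardVec K p u n s x :=
  (mul_nonneg (pow_nonneg le_rfl n) (massProd_nonneg hu)).trans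
    (pow_mul_massProd_le_backwardVec le_rfl hp hu x)

lemma backwardVec_pos {σ ε E : ℝ} (hσ : 0 < σ) (hE : 0 < E) (hKε : K * ε < 1)
    (hσp : ∀ x x', σ ≤ p x x') (hu : ∀ m ∈ Ico s (s + n), ∀ x, 0 ≤ u m x)
    (hmass : ∀ m ∈ Ico s (s + n), E * (1 - K * ε) ≤ ∑ x, u m x) (x : Fin K) :
    0 < backwardVec K p u n s x :=
  (mul_pos (pow_pos hσ n) (massProd_pos fun m hm =>
    (mul_pos hE (sub_pos.2 hKε)).trans_le (hmass m hm))).trans_le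
    (pow_mul_massProd_le_backwardVec hσ.le hσp hu x)

lemma backwardVec_le_massProd (hp : ∀ x x', 0 ≤ p x x') (hp1 : ∀ x x', p x x' ≤ 1)
    (hu : ∀ m ∈ Ico s (s + n), ∀ x, 0 ≤ u m x) (x : Fin K) :
    backwardVec K p u n s x ≤ massProd u n s := by
  induction n generalizing s x with
  | zero => simp
  | succ n ih =>
    have hu' := fun m hm => hu m (Ico_add_one_subset_Ico s n hm)
    rw [backwardVec_succ, massProd_succ, sum_mul]
    refine sum_le_sum fun x' _ => ?_
    calc p x x' * u s x' * backwardVec K p u n (s + 1) x'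
        ≤ 1 * u s x' * massProd u n (s + 1) :=
          mul_mul_le_mul_mul (hp x x') (hu s (by simp) x') (backwardVec_nonneg hp hu' x')
            (hp1 x x') le_rfl (ih hu' x')
      _ = u s x' * massProd u n (s + 1) := by rw [one_mul]

lemma backwardVec_mono (hp : ∀ x x', 0 ≤ p x x') (hpq : ∀ x x', p x x' ≤ q x x')
    (hu : ∀ m ∈ Ico s (s + n), ∀ x, 0 ≤ u m x) (huv : ∀ m ∈ Ico s (s + n), ∀ x, u m x ≤ v m x)
    (x : Fin K) : backwardVec K p u n s x ≤ backwardVec K q v n s x := by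
  induction n generalizing s x with
  | zero => simp
  | succ n ih =>
    have hu' := fun m hm => hu m (Ico_add_one_subset_Ico s n hm)
    have huv' := fun m hm => huv m (Ico_add_one_subset_Ico s n hm)
    rw [backwardVec_succ, backwardVec_succ]
    exact sum_le_sum fun x' _ =>
      mul_mul_le_mul_mul (hp x x') (hu s (by simp) x') (backwardVec_nonneg hp hu' x')
        (hpq x x') (huv s (by simp) x') (ih hu' huv' x')

lemma backwardVec_succ_le_add {ε E c W : ℝ}
    (hp : ∀ x x', 0 ≤ p x x') (hpq : ∀ x x', p x x' ≤ q x x') (hq1 : ∀ x x', q x x' ≤ 1)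
    (hqp : ∀ x x', q x x' ≤ p x x' + ε) (hu : ∀ x, 0 ≤ u s x) (huv : ∀ x, u s x ≤ v s x)
    (hvu : ∀ x, v s x ≤ u s x + ε * E) (hA : ∀ x, 0 ≤ backwardVec K p u n (s + 1) x)
    (hAW : ∀ x, backwardVec K p u n (s + 1) x ≤ W)
    (hAB : ∀ x, backwardVec K p u n (s + 1) x ≤ backwardVec K q v n (s + 1) x)
    (hBA : ∀ x, backwardVec K q v n (s + 1) x ≤ backwardVec K p u n (s + 1) x + c * W)
    (x : Fin K) :
    backwardVec K q v (n + 1) s x ≤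
      backwardVec K p u (n + 1) s x + (c * ∑ x', v s x' + ε * (K * E + ∑ x', u s x')) * W := by
  rw [backwardVec_succ, backwardVec_succ]
  calc _ ≤ ∑ x', (p x x' * u s x' * backwardVec K p u n (s + 1) x' +
          (c * v s x' + ε * (E + u s x')) * W) :=
        sum_le_sum fun x' _ => mul_mul_le_mul_mul_add (hp x x') (hpq x x') (hq1 x x') (hqp x x')
          (hu x') (huv x') (hvu x') (hA x') (hAW x') (hAB x') (hBA x')
    _ = _ := by
        simp only [sum_add_distrib, ← sum_mul, ← mul_sum, sum_const, card_univ,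
          Fintype.card_fin, nsmul_eq_mul]

lemma backwardVec_le_add_massProd {ε E : ℝ} (hε : 0 ≤ ε) (hKε : K * ε ≤ 1 / 2)
    (hp : ∀ x x', 0 ≤ p x x') (hpq : ∀ x x', p x x' ≤ q x x') (hq1 : ∀ x x', q x x' ≤ 1)
    (hqp : ∀ x x', q x x' ≤ p x x' + ε)
    (hu : ∀ m ∈ Ico s (s + n), ∀ x, 0 ≤ u m x) (huv : ∀ m ∈ Ico s (s + n), ∀ x, u m x ≤ v m x)
    (hvu : ∀ m ∈ Ico s (s + n), ∀ x, v m x ≤ u m x + ε * E)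
    (hmass : ∀ m ∈ Ico s (s + n), E * (1 - K * ε) ≤ ∑ x, u m x) (x : Fin K) :
    backwardVec K q v n s x ≤
      backwardVec K p u n s x + 3 * K * ε * (2 ^ n - 1) * massProd u n s := by
  induction n generalizing s x with
  | zero => simp
  | succ n ih =>
    have hK : (1 : ℝ) ≤ K := by exact_mod_cast x.pos
    have hs : s ∈ Ico s (s + (n + 1)) := by simp
    have hsub := Ico_add_one_subset_Ico s n
    have hu' := fun m hm => hu m (hsub hm)
    have huv' := fun m hm => huv m (hsub hm)
    have hstep := backwardVec_succ_le_add hp hpq hq1 hqp (hu s hs) (huv s hs) (hvu s hs)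
      (backwardVec_nonneg hp hu') (backwardVec_le_massProd hp (fun y y' => (hpq y y').trans
        (hq1 y y')) hu') (backwardVec_mono hp hpq hu' huv')
      (ih hu' huv' (fun m hm => hvu m (hsub hm)) (fun m hm => hmass m (hsub hm))) x
    have hV : ∑ x', v s x' ≤ ∑ x', u s x' + K * (ε * E) := by
      simpa [sum_add_distrib] using sum_le_sum fun x' (_ : x' ∈ univ) => hvu s hs x'
    have hrec := bracket_error_recursion hK hε hKε (hmass s hs)
      (sum_nonneg fun x' _ => hu s hs x') hV (one_le_pow₀ (M₀ := ℝ) one_le_two (n := n))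
    refine hstep.trans ?_
    rw [massProd_succ, pow_succ, mul_comm (2 ^ n : ℝ) 2, ← mul_assoc _ _ (massProd u n (s + 1))]
    gcongr
    exact massProd_nonneg hu'

lemma backwardVec_le_one_add_backwardErr_mul {σ ε E : ℝ} (hσ : 0 < σ) (hε : 0 ≤ ε)
    (hKε : K * ε ≤ 1 / 2) (hσp : ∀ x x', σ ≤ p x x') (hpq : ∀ x x', p x x' ≤ q x x')
    (hq1 : ∀ x x', q x x' ≤ 1) (hqp : ∀ x x', q x x' ≤ p x x' + ε)
    (hu : ∀ m ∈ Ico s (s + n), ∀ x, 0 ≤ u m x) (huv : ∀ m ∈ Ico s (s + n), ∀ x, u m x ≤ v m x)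
    (hvu : ∀ m ∈ Ico s (s + n), ∀ x, v m x ≤ u m x + ε * E)
    (hmass : ∀ m ∈ Ico s (s + n), E * (1 - K * ε) ≤ ∑ x, u m x) (x : Fin K) :
    backwardVec K q v n s x ≤ (1 + backwardErr K σ ε n) * backwardVec K p u n s x := by
  have hp : ∀ x x', 0 ≤ p x x' := fun x x' => hσ.le.trans (hσp x x')
  have hc : 0 ≤ 3 * K * ε * (2 ^ n - 1) :=
    mul_nonneg (by positivity) (sub_nonneg.2 (one_le_pow₀ one_le_two))
  have hW : massProd u n s ≤ backwardVec K p u n s x / σ ^ n :=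
    (le_div_iff₀' (pow_pos hσ n)).2 (pow_mul_massProd_le_backwardVec hσ.le hσp hu x)
  calc backwardVec K q v n s x
      ≤ backwardVec K p u n s x + 3 * K * ε * (2 ^ n - 1) * massProd u n s :=
        backwardVec_le_add_massProd hε hKε hp hpq hq1 hqp hu huv hvu hmass x
    _ ≤ backwardVec K p u n s x +
          3 * K * ε * (2 ^ n - 1) * (backwardVec K p u n s x / σ ^ n) := by
        gcongr
    _ = (1 + backwardErr K σ ε n) * backwardVec K p u n s x := by
        rw [backwardErr]; ring

lemma backwardVec_bracket {k n s : ℕ} {σ ε E : ℝ} (hσ : 0 < σ) (hε : 0 ≤ ε)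
    (hKε : K * ε ≤ 1 / 2) (hE : 0 < E)
    (hpq : ∀ x x', σ ≤ p x x' ∧ p x x' ≤ q x x' ∧ q x x' ≤ 1 ∧ q x x' ≤ p x x' + ε)
    (huv : ∀ j, 1 ≤ j → j ≤ k → ∀ x, 0 ≤ u j x ∧ u j x ≤ v j x ∧ v j x ≤ u j x + ε * E)
    (husum : ∀ j, 1 ≤ j → j ≤ k → E * (1 - K * ε) ≤ ∑ x, u j x)
    (hs : 1 ≤ s) (hn : s + n ≤ k + 1) :
    (∀ x, 0 < backwardVec K p u n s x) ∧
      (∀ x, backwardVec K p u n s x ≤ backwardVec K q v n s x) ∧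
      ∀ x, backwardVec K q v n s x ≤ (1 + backwardErr K σ ε n) * backwardVec K p u n s x := by
  have hw : ∀ m ∈ Ico s (s + n), 1 ≤ m ∧ m ≤ k := fun m hm => by
    simp only [mem_Ico] at hm; omega
  have hσp := fun x x' => (hpq x x').1
  have hpq' := fun x x' => (hpq x x').2.1
  have hu := fun m hm x => (huv m (hw m hm).1 (hw m hm).2 x).1
  have huv' := fun m hm x => (huv m (hw m hm).1 (hw m hm).2 x).2.1
  have hmass := fun m hm => husum m (hw m hm).1 (hw m hm).2
  exact ⟨backwardVec_pos hσ hE (by linarith) hσp hu hmass,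
    backwardVec_mono (fun x x' => hσ.le.trans (hσp x x')) hpq' hu huv',
    backwardVec_le_one_add_backwardErr_mul hσ hε hKε hσp hpq' (fun x x' => (hpq x x').2.2.1)
      (fun x x' => (hpq x x').2.2.2) hu huv'
      (fun m hm x => (huv m (hw m hm).1 (hw m hm).2 x).2.2) hmass⟩

end

lemma sum_abs_div_sub_div_le {ι : Type*} [Fintype ι] {f g : ι → ℝ} {ρ : ℝ}
    (hf : ∀ x, 0 ≤ f x) (hfg : ∀ x, f x ≤ g x) (hpos : 0 < ∑ x, f x)
    (hρ : ∑ x, g x ≤ ρ * ∑ x, f x) :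
    ∑ x, |f x / ∑ x', g x' - g x / ∑ x', f x'| ≤ 2 * (ρ - 1) := by
  set F := ∑ x, f x
  set G := ∑ x, g x
  have hFG : F ≤ G := sum_le_sum fun x _ => hfg x
  have hG : 0 < G := hpos.trans_le hFG
  have habs : ∀ x, |f x / G - g x / F| = g x / F - f x / G := fun x => by
    rw [abs_of_nonpos (sub_nonpos.2 (div_le_div₀ ((hf x).trans (hfg x)) (hfg x) hpos hFG)),
      neg_sub]
  rw [sum_congr rfl fun x _ => habs x, sum_sub_distrib, ← sum_div, ← sum_div]
  have hGF : G / F ≤ ρ := (div_le_iff₀ hpos).2 hρ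
  have hinv : 1 - F / G ≤ G / F - 1 := by
    rw [div_sub_one hpos.ne', one_sub_div hG.ne']
    exact div_le_div₀ (sub_nonneg.2 hFG) le_rfl hpos hFG
  linarith

lemma sum_abs_mul_div_sub_mul_div_le {ι : Type*} [Fintype ι] [Nonempty ι] {a b A B : ι → ℝ}
    {σ ε e : ℝ} (hσ : 0 < σ) (hε : 0 ≤ ε) (hσa : ∀ x, σ ≤ a x) (hab : ∀ x, a x ≤ b x)
    (hba : ∀ x, b x ≤ a x + ε) (hA : ∀ x, 0 < A x) (hAB : ∀ x, A x ≤ B x)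
    (hBA : ∀ x, B x ≤ (1 + e) * A x) :
    ∑ x, |a x * A x / ∑ x', b x' * B x' - b x * B x / ∑ x', a x' * A x'| ≤
      2 * ((1 + ε / σ) * (1 + e) - 1) := by
  have ha : ∀ x, 0 < a x := fun x => hσ.trans_le (hσa x)
  have hba' : ∀ x, b x ≤ (1 + ε / σ) * a x := fun x => by
    have hεa : ε ≤ ε * (a x / σ) := le_mul_of_one_le_right hε ((one_le_div hσ).2 (hσa x))
    linarith [hba x, show (1 + ε / σ) * a x = a x + ε * (a x / σ) by ring]
  refine sum_abs_div_sub_div_le (fun x => (mul_pos (ha x) (hA x)).le)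
    (fun x => mul_le_mul (hab x) (hAB x) (hA x).le ((ha x).le.trans (hab x)))
    (sum_pos (fun x _ => mul_pos (ha x) (hA x)) univ_nonempty) ?_
  rw [mul_sum]
  refine sum_le_sum fun x _ => ?_
  calc b x * B x ≤ ((1 + ε / σ) * a x) * ((1 + e) * A x) :=
        mul_le_mul (hba' x) (hBA x) ((hA x).le.trans (hAB x))
          (mul_nonneg (by positivity) (ha x).le)
    _ = _ := by ring

lemma two_mul_backwardErr_le {κ σ ε : ℝ} (hσ : 0 < σ) (hε : 0 ≤ ε) (hκσ : κ * σ ≤ 1) (m : ℕ) :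
    2 * backwardErr κ σ ε m ≤ 5 * (2 / σ) ^ (m + 1) * ε := by
  have h2m : (1 : ℝ) ≤ 2 ^ m := one_le_pow₀ one_le_two
  have hc : 0 ≤ 3 * ε * (2 ^ m - 1) := by nlinarith
  rw [backwardErr, div_pow, pow_succ, pow_succ]
  field_simp
  nlinarith [mul_le_mul_of_nonneg_right hκσ hc]

lemma two_mul_one_add_div_mul_one_add_backwardErr_le {κ σ ε : ℝ} (hσ : 0 < σ) (hσ1 : σ ≤ 1)
    (hε : 0 ≤ ε) (hκσ : κ * σ ≤ 1) (hκε : κ * ε ≤ 1 / 2) (k : ℕ) :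
    2 * ((1 + ε / σ) * (1 + backwardErr κ σ ε k) - 1) ≤ 5 * (2 / σ) ^ (k + 1) * ε := by
  have h2k : (1 : ℝ) ≤ 2 ^ k := one_le_pow₀ one_le_two
  have hσk : σ ^ k ≤ 1 := pow_le_one₀ hσ.le hσ1
  have hc : 0 ≤ 3 * ε * (2 ^ k - 1) := by nlinarith
  have hσk0 := pow_pos hσ k
  rw [backwardErr, div_pow, pow_succ, pow_succ]
  field_simp
  nlinarith [mul_le_mul_of_nonneg_right hκσ hc, mul_le_mul_of_nonneg_right hκε hc,
    mul_le_mul_of_nonneg_left hσk hε]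

theorem stmt8_general (K k : ℕ) (hK : 1 ≤ K)
    (σ : ℝ) (hσ0 : 0 < σ) (hσ1 : σ ≤ 1) (ε : ℝ) (hε : 0 < ε) (D : ℝ)
    (p q : Fin K → Fin K → ℝ)
    (hpq : ∀ x x', σ ≤ p x x' ∧ p x x' ≤ q x x' ∧ q x x' ≤ 1 ∧ q x x' ≤ p x x' + ε)
    (u v : ℕ → Fin K → ℝ)
    (huv : ∀ j, 1 ≤ j → j ≤ k → ∀ x,
      0 ≤ u j x ∧ u j x ≤ v j x ∧ v j x ≤ u j x + ε * Real.exp (-D))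
    (husum : ∀ j, 1 ≤ j → j ≤ k → Real.exp (-D) * (1 - K * ε) ≤ ∑ x, u j x)
    (hKε : (K : ℝ) * ε ≤ 1 / 2) (hKσ : (K : ℝ) * σ ≤ 1)
    (a b : Fin K → ℝ)
    (hab : ∀ x, σ ≤ a x ∧ a x ≤ b x ∧ b x ≤ 1 ∧ b x ≤ a x + ε) :
    (∑ x, |a x * alphaVec K k p u 0 x / (∑ x', b x' * alphaVec K k q v 0 x')
          - b x * alphaVec K k q v 0 x / (∑ x', a x' * alphaVec K k p u 0 x')|
        ≤ 5 * (2 / σ) ^ (k + 1) * ε) ∧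
    (∀ i, 1 ≤ i → i ≤ k → ∀ x : Fin K,
      ∑ x', |alphaVec K k p u i x' * p x x' * u i x'
              / (∑ x'', alphaVec K k q v i x'' * q x x'' * v i x'')
            - alphaVec K k q v i x' * q x x' * v i x'
              / (∑ x'', alphaVec K k p u i x'' * p x x'' * u i x'')|
        ≤ 5 * (2 / σ) ^ (k - i + 2) * ε) := by
  have bracket := fun {n s : ℕ} => backwardVec_bracket (n := n) (s := s) hσ0 hε.le hKε
    (exp_pos (-D)) hpq huv husum
  refine ⟨?_, fun i hi hik x => ?_⟩
  · have : Nonempty (Fin K) := ⟨⟨0, hK⟩⟩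
    obtain ⟨hA, hAB, hBA⟩ := bracket le_rfl (show 1 + k ≤ k + 1 by omega)
    exact (sum_abs_mul_div_sub_mul_div_le hσ0 hε.le (fun x => (hab x).1) (fun x => (hab x).2.1)
      (fun x => (hab x).2.2.2) hA hAB hBA).trans
      (two_mul_one_add_div_mul_one_add_backwardErr_le hσ0 hσ1 hε.le hKσ hKε k)
  · simp only [alphaVec_eq_backwardVec]
    obtain ⟨hA, hAB, -⟩ :=
      bracket (show 1 ≤ i + 1 by omega) (show i + 1 + (k - i) ≤ k + 1 by omega)
    obtain ⟨hpos, -, hρ⟩ := bracket hi (show i + (k - i + 1) ≤ k + 1 by omega)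
    have hpos := hpos x
    have hρ := hρ x
    rw [← sum_backwardVec_mul_mul] at hpos
    rw [← sum_backwardVec_mul_mul, ← sum_backwardVec_mul_mul] at hρ
    have hp : ∀ x', 0 ≤ p x x' := fun x' => hσ0.le.trans (hpq x x').1
    refine (sum_abs_div_sub_div_le
      (fun x' => mul_nonneg (mul_nonneg (hA x').le (hp x')) (huv i hi hik x').1)
      (fun x' => mul_mul_le_mul_mul (hA x').le (hp x') (huv i hi hik x').1 (hAB x')
        (hpq x x').2.1 (huv i hi hik x').2.1) hpos hρ).trans ?_
    rw [add_sub_cancel_left]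
    exact two_mul_backwardErr_le hσ0 hε.le hKσ (k - i + 1)

/-- Size of the brackets `[ν, ω]` (for the initial conditional distribution of the hidden
chain) and `[f_i, g_i]` (for the forward transition operators) built from brackets of the
HMM parameters. -/
theorem stmt8 (K k : ℕ) (hK : 1 ≤ K) (hk : 1 ≤ k)
    (σ : ℝ) (hσ0 : 0 < σ) (hσ1 : σ ≤ 1) (ε : ℝ) (hε : 0 < ε) (D : ℝ)
    (p q : Fin K → Fin K → ℝ)
    (hpq : ∀ x x', σ ≤ p x x' ∧ p x x' ≤ q x x' ∧ q x x' ≤ 1 ∧ q x x' ≤ p x x' + ε)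
    (u v : ℕ → Fin K → ℝ)
    (huv : ∀ j, 1 ≤ j → j ≤ k → ∀ x,
      0 ≤ u j x ∧ u j x ≤ v j x ∧ v j x ≤ u j x + ε * Real.exp (-D))
    (husum : ∀ j, 1 ≤ j → j ≤ k → Real.exp (-D) * (1 - K * ε) ≤ ∑ x, u j x)
    (hKε : (K : ℝ) * ε ≤ 1 / 2) (hKσ : (K : ℝ) * σ ≤ 1)
    (a b : Fin K → ℝ)
    (hab : ∀ x, σ ≤ a x ∧ a x ≤ b x ∧ b x ≤ 1 ∧ b x ≤ a x + ε) :
    (∑ x, |a x * alphaVec K k p u 0 x / (∑ x', b x' * alphaVec K k q v 0 x')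
          - b x * alphaVec K k q v 0 x / (∑ x', a x' * alphaVec K k p u 0 x')|
        ≤ 5 * (2 / σ) ^ (k + 1) * ε) ∧
    (∀ i, 1 ≤ i → i ≤ k → ∀ x : Fin K,
      ∑ x', |alphaVec K k p u i x' * p x x' * u i x'
              / (∑ x'', alphaVec K k q v i x'' * q x x'' * v i x'')
            - alphaVec K k q v i x' * q x x' * v i x'
              / (∑ x'', alphaVec K k p u i x'' * p x x'' * u i x'')|
        ≤ 5 * (2 / σ) ^ (k - i + 2) * ε) :=
  stmt8_general K k hK σ hσ0 hσ1 ε hε D p q hpq u v huv husum hKε hKσ a b hab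
end

section
/- Let A, B > 0 and C ≥ 1 be real numbers. Define H : (0,∞) → ℝ by H(x) = A log( max(B/x, C) ) and φ : (0,∞) → ℝ by φ(x) = x √(π A) (1 + √( log( max(B/x, C) ) )). Then for every x > 0: x² H(x) ≤ φ(x)² and ∫₀^x √(H(u)) du ≤ φ(x). -/
/-!
Write `L u = log (max (B / u) C)`. For `0 < u ≤ x` one has `max (B / u) C ≤ (x / u) * max (B / x) C`,
hence `L u ≤ log (x / u) + L x`, and `√(a + b) ≤ (1 + a) / 2 + √b` turns this into a bound on `√(L u)`
that is integrable near `0`. Since `∫₀^x log (x / u) du = x`, integrating gives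
`∫₀^x √(L u) du ≤ x * (1 + √(L x))`. Against both claimed bounds the factor `√π ≥ 1` is pure slack.
-/

open MeasureTheory Real Set

namespace Real

theorem self_le_one_add_sqrt_sq {t : ℝ} (ht : 0 ≤ t) : t ≤ (1 + √t) ^ 2 := by
  nlinarith [sq_sqrt ht, sqrt_nonneg t]

theorem sqrt_add_le_one_add_div_two_add_sqrt {a b : ℝ} (ha : -1 ≤ a) (hb : 0 ≤ b) :
    √(a + b) ≤ (1 + a) / 2 + √b := by
  rw [sqrt_le_iff]
  constructor
  · linarith [sqrt_nonneg b]
  · nlinarith [sq_sqrt hb, sqrt_nonneg b, sq_nonneg (a - 1)]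

theorem log_max_div_le_log_div_add {B C u x : ℝ} (hC : 0 < C) (hu : 0 < u) (hux : u ≤ x) :
    log (max (B / u) C) ≤ log (x / u) + log (max (B / x) C) := by
  have hx : 0 < x := hu.trans_le hux
  have hxu : 1 ≤ x / u := (one_le_div hu).2 hux
  have hmax : max (B / u) C ≤ x / u * max (B / x) C := by
    refine max_le ?_ ?_
    · calc B / u = x / u * (B / x) := by field_simp
        _ ≤ x / u * max (B / x) C := by gcongr; exact le_max_left _ _
    · calc C = 1 * C := (one_mul C).symm
        _ ≤ x / u * max (B / x) C := by gcongr; exact le_max_right _ _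
  rw [← log_mul (by positivity) (hC.trans_le (le_max_right _ _)).ne']
  exact log_le_log (hC.trans_le (le_max_right _ _)) hmax

theorem integral_log_div (x : ℝ) : ∫ u in (0 : ℝ)..x, log (x / u) = x := by
  rcases eq_or_ne x 0 with rfl | hx
  · simp
  have h_neg (u : ℝ) : log (x / u) = -log (u / x) := by rw [← log_inv, inv_div]
  simp_rw [h_neg, intervalIntegral.integral_neg, intervalIntegral.integral_comp_div log hx,
    integral_log]
  simp [hx]

theorem intervalIntegrable_log_div {x : ℝ} (hx : 0 < x) :
    IntervalIntegrable (fun u ↦ log (x / u)) volume 0 x := by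
  have h := (intervalIntegrable_const (c := log x)).sub
    (intervalIntegral.intervalIntegrable_log' (a := 0) (b := x))
  rw [intervalIntegrable_iff_integrableOn_Ioc_of_le hx.le] at h ⊢
  exact h.congr_fun (fun u hu ↦ (log_div hx.ne' hu.1.ne').symm) measurableSet_Ioc

theorem sqrt_log_max_div_le {B C u x : ℝ} (hC : 1 ≤ C) (hu : 0 < u) (hux : u ≤ x) :
    √(log (max (B / u) C)) ≤ (1 + log (x / u)) / 2 + √(log (max (B / x) C)) := by
  have hlog_div : 0 ≤ log (x / u) := log_nonneg ((one_le_div hu).2 hux)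
  calc √(log (max (B / u) C)) ≤ √(log (x / u) + log (max (B / x) C)) :=
        sqrt_le_sqrt (log_max_div_le_log_div_add (by linarith) hu hux)
    _ ≤ (1 + log (x / u)) / 2 + √(log (max (B / x) C)) :=
        sqrt_add_le_one_add_div_two_add_sqrt (by linarith)
          (log_nonneg (hC.trans (le_max_right _ _)))

theorem setIntegral_sqrt_log_max_div_le {B C x : ℝ} (hC : 1 ≤ C) (hx : 0 < x) :
    ∫ u in Ioo 0 x, √(log (max (B / u) C)) ≤ x * (1 + √(log (max (B / x) C))) := by
  set c := √(log (max (B / x) C))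
  have h_log := intervalIntegrable_log_div hx
  have h_half : IntervalIntegrable (fun u ↦ (1 + log (x / u)) / 2) volume 0 x :=
    (intervalIntegrable_const.add h_log).div_const 2
  have h_int : IntervalIntegrable (fun u ↦ (1 + log (x / u)) / 2 + c) volume 0 x :=
    h_half.add intervalIntegrable_const
  rw [← integral_Ioc_eq_integral_Ioo]
  calc ∫ u in Ioc 0 x, √(log (max (B / u) C)) ≤ ∫ u in Ioc 0 x, ((1 + log (x / u)) / 2 + c) :=
        integral_mono_of_nonneg (.of_forall fun _ ↦ sqrt_nonneg _)
          ((intervalIntegrable_iff_integrableOn_Ioc_of_le hx.le).1 h_int)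
          ((ae_restrict_mem measurableSet_Ioc).mono fun u hu ↦ sqrt_log_max_div_le hC hu.1 hu.2)
    _ = ∫ u in (0 : ℝ)..x, ((1 + log (x / u)) / 2 + c) := (intervalIntegral.integral_of_le hx.le).symm
    _ = x * (1 + c) := by
        rw [intervalIntegral.integral_add h_half intervalIntegrable_const,
          intervalIntegral.integral_div, intervalIntegral.integral_add intervalIntegrable_const h_log,
          integral_log_div]
        simp only [intervalIntegral.integral_const, sub_zero, smul_eq_mul, mul_one, add_self_div_two]
        ring

end Real

theorem stmt10_general (A B C : ℝ) (hA : 0 < A) (hC : 1 ≤ C) :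
    ∀ x : ℝ, 0 < x →
      x ^ 2 * (A * Real.log (max (B / x) C))
          ≤ (x * Real.sqrt (Real.pi * A) * (1 + Real.sqrt (Real.log (max (B / x) C)))) ^ 2 ∧
      (∫ u in Set.Ioo (0 : ℝ) x, Real.sqrt (A * Real.log (max (B / u) C)))
          ≤ x * Real.sqrt (Real.pi * A) * (1 + Real.sqrt (Real.log (max (B / x) C))) := by
  intro x hx
  set L := log (max (B / x) C)
  have hL : 0 ≤ L := log_nonneg (hC.trans (le_max_right _ _))
  have hA_le : A ≤ π * A := le_mul_of_one_le_left hA.le (by linarith [pi_gt_three])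
  constructor
  · rw [mul_pow, mul_pow, sq_sqrt (by positivity)]
    calc x ^ 2 * (A * L) ≤ x ^ 2 * (π * A * (1 + √L) ^ 2) := by
          gcongr x ^ 2 * ?_
          exact mul_le_mul hA_le (self_le_one_add_sqrt_sq hL) hL (by positivity)
      _ = x ^ 2 * (π * A) * (1 + √L) ^ 2 := by ring
  · simp_rw [sqrt_mul hA.le, integral_const_mul]
    calc √A * ∫ u in Ioo 0 x, √(log (max (B / u) C)) ≤ √A * (x * (1 + √L)) := by
          gcongr
          exact setIntegral_sqrt_log_max_div_le hC hx
      _ ≤ x * √(π * A) * (1 + √L) := by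
          rw [mul_left_comm, ← mul_assoc]
          gcongr

/-- For `H(x) = A log(max(B/x, C))` and `φ(x) = x √(πA) (1 + √(log(max(B/x, C))))`,
one has `x² H(x) ≤ φ(x)²` and `∫₀^x √(H(u)) du ≤ φ(x)` for every `x > 0`. -/
theorem stmt10 (A B C : ℝ) (hA : 0 < A) (hB : 0 < B) (hC : 1 ≤ C) :
    ∀ x : ℝ, 0 < x →
      x ^ 2 * (A * Real.log (max (B / x) C))
          ≤ (x * Real.sqrt (Real.pi * A) * (1 + Real.sqrt (Real.log (max (B / x) C)))) ^ 2 ∧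
      (∫ u in Set.Ioo (0 : ℝ) x, Real.sqrt (A * Real.log (max (B / u) C)))
          ≤ x * Real.sqrt (Real.pi * A) * (1 + Real.sqrt (Real.log (max (B / x) C))) :=
  stmt10_general A B C hA hC
end

section
/- Let n ≥ 1 be an integer and A, B, C, E real numbers with A ≥ 1, B ≥ 1, C ≥ 1, E ≥ 1. Define φ : (0,∞) → ℝ by φ(x) = x A (1 + √( log( max(B/x, C) ) )). Let σ > 0 satisfy E · φ(σ) = σ² √n. If [ (A C E / B) (1 + √( log B + log n )) ]² ≤ n, then σ ≤ (A E / √n) (1 + √( log B + log n )). -/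
/-!
Cancelling one factor `σ` turns the fixed-point equation into
`σ √n = E A (1 + √(log M))` with `M = max (B / σ) C`, so it suffices to show `M ≤ B n`.
The right-hand side is at least `E A ≥ 1`, hence `σ ≥ 1 / √n` and `B / σ ≤ B √n`;
since `A E (1 + √(log B + log n)) ≥ 1`, the size condition gives `C / B ≤ √n`.
-/

open Real

lemma le_mul_sqrt_of_sq_le {b c k x : ℝ} (hb : 0 < b) (hc : 0 ≤ c) (hk : 1 ≤ k)
    (h : (c * k / b) ^ 2 ≤ x) : c ≤ b * √x := by
  rw [← div_le_iff₀' hb]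
  calc c / b ≤ c * k / b := by gcongr; exact le_mul_of_one_le_right hc hk
    _ ≤ |c * k / b| := le_abs_self _
    _ ≤ √x := abs_le_sqrt h

lemma max_div_le_mul {b c σ s : ℝ} (hb : 0 ≤ b) (hσ : 0 < σ) (hσs : 1 ≤ σ * s)
    (hc : c ≤ b * s) : max (b / σ) c ≤ b * s := by
  refine max_le ?_ hc
  rw [div_le_iff₀ hσ, mul_assoc, mul_comm s]
  exact le_mul_of_one_le_right hb hσs

/-- Upper bound on the solution `σ` of the fixed-point equation `E φ(σ) = σ² √n` for
`φ(x) = x A (1 + √(log(max(B/x, C))))`. -/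
theorem stmt11 (n : ℕ) (hn : 1 ≤ n) (A B C E : ℝ)
    (hA : 1 ≤ A) (hB : 1 ≤ B) (hC : 1 ≤ C) (hE : 1 ≤ E)
    (σ : ℝ) (hσ : 0 < σ)
    (hroot : E * (σ * A * (1 + Real.sqrt (Real.log (max (B / σ) C))))
      = σ ^ 2 * Real.sqrt n)
    (hcond : ((A * C * E / B) * (1 + Real.sqrt (Real.log B + Real.log n))) ^ 2 ≤ n) :
    σ ≤ A * E / Real.sqrt n * (1 + Real.sqrt (Real.log B + Real.log n)) := by
  have hn' : (1 : ℝ) ≤ n := by exact_mod_cast hn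
  have hEA : 1 ≤ E * A := one_le_mul_of_one_le_of_one_le hE hA
  have hfix : σ * √n = E * A * (1 + √(log (max (B / σ) C))) :=
    mul_left_cancel₀ hσ.ne' (by linear_combination -hroot)
  have hσn : 1 ≤ σ * √n :=
    hfix ▸ one_le_mul_of_one_le_of_one_le hEA (le_add_of_nonneg_right (sqrt_nonneg _))
  have hCB : C ≤ B * √n := by
    refine le_mul_sqrt_of_sq_le (k := A * E * (1 + √(log B + log n)))
      (by linarith) (by linarith) ?_ (by convert hcond using 2; ring)
    exact one_le_mul_of_one_le_of_one_le (mul_comm E A ▸ hEA)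
      (le_add_of_nonneg_right (sqrt_nonneg _))
  have hM : max (B / σ) C ≤ B * n :=
    (max_div_le_mul (by linarith) hσ hσn hCB).trans
      (mul_le_mul_of_nonneg_left (sqrt_le_self_iff.mpr (Or.inr hn')) (by linarith))
  have hlog : log (max (B / σ) C) ≤ log B + log n := by
    rw [← log_mul (by positivity) (by positivity)]
    exact log_le_log (by positivity) hM
  rw [div_mul_eq_mul_div, le_div_iff₀ (by positivity), hfix, mul_comm E A]
  gcongr
end

section
/- Let p ≥ 2 be an even integer and n ≥ 10 an integer. Let K, M be integers with 1 ≤ K ≤ n and 1 ≤ M ≤ n/2. For each x ∈ Fin K, let (w_{x,i})_{i ∈ Fin M} be nonnegative reals with Σ_i w_{x,i} = 1, s_{x,i} ∈ [1/M, 1], and μ_{x,i} ∈ [−n, n]. Define γ_x : ℝ → ℝ by γ_x(y) = n^{−2} + (1 − n^{−2}) · π (1 + y²) · Σ_{i ∈ Fin M} w_{x,i} · (1 / (2 s_{x,i} Γ(1 + 1/p))) · exp( − ((y − μ_{x,i}) / s_{x,i})^p ). Then for every y ∈ ℝ: −2 log n ≤ log( Σ_{x ∈ Fin K} γ_x(y)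 ) ≤ 5 log n. -/
/-!
Each `γ_x` is at least its floor `n⁻²`, which gives the lower bound. For the upper bound the
Cauchy factor `π (1 + y²)` is absorbed by the tail of the exponential power density: with
`t = (y - μ) / s` one has `1 + y² ≤ (1 + (n + 1)²) max(1, t²)` and `t² e^{-t^p} ≤ 1`,
while `Γ(1 + 1/p) ≥ e⁻¹` and `s ≥ 1/M` bound the normalising constant by `e M / 2`. Summing
over at most `n` states leaves a polynomial of degree four in `n`, which is below `n⁵` once
`n ≥ 10`.
-/

open Finset Real Set MeasureTheory

namespace Real

theorem exp_neg_one_le_Gamma_one_add {a : ℝ} (ha : 0 ≤ a) : exp (-1) ≤ Gamma (1 + a) := by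
  have ha1 : 0 < 1 + a := by linarith
  have hint := GammaIntegral_convergent ha1
  have hIoi : Ioi (1 : ℝ) ⊆ Ioi 0 := Ioi_subset_Ioi zero_le_one
  rw [Gamma_eq_integral ha1, ← integral_exp_neg_Ioi 1]
  calc ∫ x in Ioi (1 : ℝ), exp (-x)
      ≤ ∫ x in Ioi (1 : ℝ), exp (-x) * x ^ (1 + a - 1) := by
        refine setIntegral_mono_on (by simpa using exp_neg_integrableOn_Ioi 1 one_pos)
          (hint.mono_set hIoi) measurableSet_Ioi fun x hx => ?_
        exact le_mul_of_one_le_right (exp_pos _).le (one_le_rpow (le_of_lt hx) (by linarith))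
    _ ≤ ∫ x in Ioi (0 : ℝ), exp (-x) * x ^ (1 + a - 1) := by
        refine setIntegral_mono_set hint ?_ hIoi.eventuallyLE
        filter_upwards [self_mem_ae_restrict measurableSet_Ioi] with x (hx : 0 < x)
        positivity

theorem sq_mul_exp_neg_pow_le_one {p : ℕ} (hp : Even p) (hp2 : 2 ≤ p) {t : ℝ}
    (ht : 1 ≤ |t|) : t ^ 2 * exp (-t ^ p) ≤ 1 := by
  have hpow : t ^ 2 ≤ t ^ p := by
    simpa only [hp.pow_abs, sq_abs] using pow_le_pow_right₀ ht hp2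
  calc t ^ 2 * exp (-t ^ p) ≤ t ^ p * exp (-t ^ p) := by gcongr
    _ ≤ exp (-1) := mul_exp_neg_le_exp_neg_one _
    _ ≤ 1 := exp_le_one_iff.2 (by norm_num)

theorem one_add_sq_mul_exp_neg_pow_le {p : ℕ} (hp : Even p) (hp2 : 2 ≤ p) {R μ s : ℝ}
    (hμ : |μ| ≤ R) (hs0 : 0 < s) (hs1 : s ≤ 1) (y : ℝ) :
    (1 + y ^ 2) * exp (-((y - μ) / s) ^ p) ≤ 1 + (R + 1) ^ 2 := by
  set t := (y - μ) / s
  have hy : y = μ + s * t := by simp only [t]; field_simp; ring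
  have hyt : |y| ≤ R + |t| := by
    have : s * |t| ≤ |t| := mul_le_of_le_one_left (abs_nonneg t) hs1
    rw [hy]
    calc |μ + s * t| ≤ |μ| + |s * t| := abs_add_le _ _
      _ ≤ R + |t| := by rw [abs_mul, abs_of_pos hs0]; linarith
  have hR : 0 ≤ R := (abs_nonneg μ).trans hμ
  rcases le_total |t| 1 with ht | ht
  · have hy2 : y ^ 2 ≤ (R + 1) ^ 2 := by rw [← sq_abs]; gcongr; linarith
    have hexp : exp (-t ^ p) ≤ 1 := exp_le_one_iff.2 (neg_nonpos.2 (hp.pow_nonneg t))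
    calc (1 + y ^ 2) * exp (-t ^ p) ≤ (1 + (R + 1) ^ 2) * 1 := by gcongr
      _ = 1 + (R + 1) ^ 2 := mul_one _
  · have hy2 : 1 + y ^ 2 ≤ (1 + (R + 1) ^ 2) * t ^ 2 := by
      have h1 : |y| ≤ (R + 1) * |t| := by nlinarith
      have h2 : y ^ 2 ≤ (R + 1) ^ 2 * t ^ 2 := by
        rw [← sq_abs y, ← sq_abs t, ← mul_pow]; gcongr
      nlinarith [one_le_sq_iff_one_le_abs t |>.2 ht]
    calc (1 + y ^ 2) * exp (-t ^ p) ≤ (1 + (R + 1) ^ 2) * t ^ 2 * exp (-t ^ p) := by gcongr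
      _ = (1 + (R + 1) ^ 2) * (t ^ 2 * exp (-t ^ p)) := mul_assoc _ _ _
      _ ≤ (1 + (R + 1) ^ 2) * 1 := by gcongr; exact sq_mul_exp_neg_pow_le_one hp hp2 ht
      _ = 1 + (R + 1) ^ 2 := mul_one _

end Real

noncomputable def expPowerDensity (p : ℕ) (μ s y : ℝ) : ℝ :=
  1 / (2 * s * Gamma (1 + 1 / (p : ℝ))) * exp (-((y - μ) / s) ^ p)

section ExpPowerDensity

variable {p : ℕ} {μ s : ℝ}

theorem expPowerDensity_nonneg (hs : 0 ≤ s) (y : ℝ) : 0 ≤ expPowerDensity p μ s y := by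
  unfold expPowerDensity
  have := Gamma_nonneg_of_nonneg (by positivity : (0 : ℝ) ≤ 1 + 1 / (p : ℝ))
  positivity

theorem pi_mul_one_add_sq_mul_expPowerDensity_le (hp : Even p) (hp2 : 2 ≤ p) {R : ℝ}
    (hμ : |μ| ≤ R) (hs0 : 0 < s) (hs1 : s ≤ 1) (y : ℝ) :
    π * (1 + y ^ 2) * expPowerDensity p μ s y ≤ π * (1 + (R + 1) ^ 2) * (exp 1 / (2 * s)) := by
  have hΓ := exp_neg_one_le_Gamma_one_add (by positivity : (0 : ℝ) ≤ 1 / (p : ℝ))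
  have hΓinv : (Gamma (1 + 1 / (p : ℝ)))⁻¹ ≤ exp 1 := by
    simpa [exp_neg] using inv_anti₀ (exp_pos (-1)) hΓ
  have hnorm : 1 / (2 * s * Gamma (1 + 1 / (p : ℝ))) ≤ exp 1 / (2 * s) :=
    calc 1 / (2 * s * Gamma (1 + 1 / (p : ℝ)))
        = (2 * s)⁻¹ * (Gamma (1 + 1 / (p : ℝ)))⁻¹ := by rw [one_div, mul_inv]
      _ ≤ (2 * s)⁻¹ * exp 1 := by gcongr
      _ = exp 1 / (2 * s) := by ring
  have htail := one_add_sq_mul_exp_neg_pow_le hp hp2 hμ hs0 hs1 y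
  calc π * (1 + y ^ 2) * expPowerDensity p μ s y
      = π * ((1 + y ^ 2) * exp (-((y - μ) / s) ^ p)) * (1 / (2 * s * Gamma (1 + 1 / p))) := by
        unfold expPowerDensity; ring
    _ ≤ π * (1 + (R + 1) ^ 2) * (exp 1 / (2 * s)) := by gcongr

end ExpPowerDensity

noncomputable def mixtureDensityWrtCauchy {ι : Type*} [Fintype ι] (p : ℕ) (a : ℝ)
    (w μ s : ι → ℝ) (y : ℝ) : ℝ :=
  a + (1 - a) * (π * (1 + y ^ 2)) * ∑ i, w i * expPowerDensity p (μ i) (s i) y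

section MixtureDensityWrtCauchy

variable {ι : Type*} [Fintype ι] {p : ℕ} {a : ℝ} {w μ s : ι → ℝ}

theorem sum_mul_expPowerDensity_nonneg (hw0 : ∀ i, 0 ≤ w i) (hs : ∀ i, 0 ≤ s i) (y : ℝ) :
    0 ≤ ∑ i, w i * expPowerDensity p (μ i) (s i) y :=
  sum_nonneg fun i _ => mul_nonneg (hw0 i) (expPowerDensity_nonneg (hs i) y)

theorem pi_mul_one_add_sq_mul_sum_expPowerDensity_le (hp : Even p) (hp2 : 2 ≤ p) {R L : ℝ}
    (hw0 : ∀ i, 0 ≤ w i) (hw1 : ∑ i, w i = 1) (hμ : ∀ i, |μ i| ≤ R)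
    (hs : ∀ i, 0 < s i ∧ s i ≤ 1) (hsL : ∀ i, (s i)⁻¹ ≤ L) (y : ℝ) :
    π * (1 + y ^ 2) * ∑ i, w i * expPowerDensity p (μ i) (s i) y ≤
      π * (1 + (R + 1) ^ 2) * (exp 1 * L / 2) := by
  rw [mul_sum]
  calc ∑ i, π * (1 + y ^ 2) * (w i * expPowerDensity p (μ i) (s i) y)
      ≤ ∑ i, w i * (π * (1 + (R + 1) ^ 2) * (exp 1 * L / 2)) := by
        refine sum_le_sum fun i _ => ?_
        have hterm := pi_mul_one_add_sq_mul_expPowerDensity_le hp hp2 (hμ i) (hs i).1 (hs i).2 y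
        have hscale : exp 1 / (2 * s i) ≤ exp 1 * L / 2 := by
          rw [mul_comm 2, ← div_div, div_eq_mul_inv (exp 1)]
          gcongr
          exact hsL i
        rw [mul_left_comm]
        exact mul_le_mul_of_nonneg_left
          (hterm.trans (mul_le_mul_of_nonneg_left hscale (by positivity))) (hw0 i)
    _ = π * (1 + (R + 1) ^ 2) * (exp 1 * L / 2) := by rw [← sum_mul, hw1, one_mul]

theorem le_mixtureDensityWrtCauchy (ha : a ≤ 1) (hw0 : ∀ i, 0 ≤ w i) (hs : ∀ i, 0 ≤ s i)
    (y : ℝ) : a ≤ mixtureDensityWrtCauchy p a w μ s y := by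
  have hsum := sum_mul_expPowerDensity_nonneg (p := p) (μ := μ) hw0 hs y
  have : 0 ≤ (1 - a) * (π * (1 + y ^ 2)) := mul_nonneg (by linarith) (by positivity)
  unfold mixtureDensityWrtCauchy
  nlinarith

theorem mixtureDensityWrtCauchy_le (hp : Even p) (hp2 : 2 ≤ p) {R L : ℝ} (ha0 : 0 ≤ a)
    (ha1 : a ≤ 1) (hw0 : ∀ i, 0 ≤ w i) (hw1 : ∑ i, w i = 1) (hμ : ∀ i, |μ i| ≤ R)
    (hs : ∀ i, 0 < s i ∧ s i ≤ 1) (hsL : ∀ i, (s i)⁻¹ ≤ L) (y : ℝ) :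
    mixtureDensityWrtCauchy p a w μ s y ≤ 1 + π * (1 + (R + 1) ^ 2) * (exp 1 * L / 2) := by
  have hmix := pi_mul_one_add_sq_mul_sum_expPowerDensity_le hp hp2 hw0 hw1 hμ hs hsL y
  have hmix0 : 0 ≤ π * (1 + y ^ 2) * ∑ i, w i * expPowerDensity p (μ i) (s i) y :=
    mul_nonneg (by positivity) (sum_mul_expPowerDensity_nonneg hw0 (fun i => (hs i).1.le) y)
  unfold mixtureDensityWrtCauchy
  rw [mul_assoc]
  nlinarith

end MixtureDensityWrtCauchy

theorem mul_one_add_pi_mul_exp_one_le_pow_five {n K M : ℝ} (hn : 10 ≤ n) (hKn : K ≤ n)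
    (hM0 : 0 ≤ M) (hMn : M ≤ n / 2) :
    K * (1 + π * (1 + (n + 1) ^ 2) * (exp 1 * M / 2)) ≤ n ^ 5 := by
  have hpi := pi_lt_d2
  have he := exp_one_lt_d9
  have hsq : 1 + (n + 1) ^ 2 ≤ 1.22 * n ^ 2 := by nlinarith
  have hC : π * (1 + (n + 1) ^ 2) * (exp 1 * M / 2) ≤ 3 * n ^ 3 :=
    calc π * (1 + (n + 1) ^ 2) * (exp 1 * M / 2)
        ≤ 3.15 * (1.22 * n ^ 2) * (2.72 * (n / 2) / 2) := by gcongr; linarith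
      _ ≤ 3 * n ^ 3 := by nlinarith [pow_pos (by linarith : (0 : ℝ) < n) 3]
  calc K * (1 + π * (1 + (n + 1) ^ 2) * (exp 1 * M / 2)) ≤ n * (1 + 3 * n ^ 3) :=
        mul_le_mul hKn (by linarith) (by positivity) (by linarith)
    _ ≤ n ^ 5 := by nlinarith [pow_pos (by linarith : (0 : ℝ) < n) 3]

theorem stmt12_general (p : ℕ) (hp2 : 2 ≤ p) (hpeven : Even p)
    (n : ℕ) (hn : 10 ≤ n)
    (K M : ℕ) (hK1 : 1 ≤ K) (hKn : K ≤ n) (hMn : (M : ℝ) ≤ (n : ℝ) / 2)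
    (w : Fin K → Fin M → ℝ) (hw0 : ∀ x i, 0 ≤ w x i) (hwsum : ∀ x, ∑ i, w x i = 1)
    (s : Fin K → Fin M → ℝ) (hs : ∀ x i, 1 / (M : ℝ) ≤ s x i ∧ s x i ≤ 1)
    (μ : Fin K → Fin M → ℝ) (hμ : ∀ x i, -(n : ℝ) ≤ μ x i ∧ μ x i ≤ (n : ℝ))
    (γ : Fin K → ℝ → ℝ)
    (hγ : ∀ x y, γ x y = ((n : ℝ) ^ 2)⁻¹ +
      (1 - ((n : ℝ) ^ 2)⁻¹) * (Real.pi * (1 + y ^ 2)) *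
        ∑ i, w x i * (1 / (2 * s x i * Real.Gamma (1 + 1 / (p : ℝ))) *
          Real.exp (-((y - μ x i) / s x i) ^ p))) :
    ∀ y : ℝ,
      -2 * Real.log n ≤ Real.log (∑ x, γ x y) ∧
      Real.log (∑ x, γ x y) ≤ 5 * Real.log n := by
  intro y
  have hnR : (10 : ℝ) ≤ n := by exact_mod_cast hn
  have hfloor0 : 0 < ((n : ℝ) ^ 2)⁻¹ := by positivity
  have hfloor1 : ((n : ℝ) ^ 2)⁻¹ ≤ 1 := inv_le_one_of_one_le₀ (by nlinarith)
  have hs' : ∀ x i, 0 < s x i ∧ s x i ≤ 1 := fun x i =>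
    ⟨(by have := i.pos; positivity : 0 < 1 / (M : ℝ)).trans_le (hs x i).1, (hs x i).2⟩
  have hsM : ∀ x i, (s x i)⁻¹ ≤ M := fun x i => by
    have := i.pos
    rw [inv_le_comm₀ (hs' x i).1 (by positivity), ← one_div]
    exact (hs x i).1
  set C := π * (1 + ((n : ℝ) + 1) ^ 2) * (exp 1 * M / 2)
  have hγ_bounds : ∀ x, ((n : ℝ) ^ 2)⁻¹ ≤ γ x y ∧ γ x y ≤ 1 + C := fun x => by
    rw [hγ x y]
    exact ⟨le_mixtureDensityWrtCauchy hfloor1 (hw0 x) (fun i => (hs' x i).1.le) y,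
      mixtureDensityWrtCauchy_le hpeven hp2 hfloor0.le hfloor1 (hw0 x) (hwsum x)
        (fun i => abs_le.2 (hμ x i)) (hs' x) (hsM x) y⟩
  have hlow : ((n : ℝ) ^ 2)⁻¹ ≤ ∑ x, γ x y :=
    calc ((n : ℝ) ^ 2)⁻¹ ≤ K • ((n : ℝ) ^ 2)⁻¹ := by
          rw [nsmul_eq_mul]; exact le_mul_of_one_le_left hfloor0.le (by exact_mod_cast hK1)
      _ ≤ ∑ x, γ x y := by
          simpa using card_nsmul_le_sum univ (γ · y) _ fun x _ => (hγ_bounds x).1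
  have hup : ∑ x, γ x y ≤ (n : ℝ) ^ 5 :=
    calc ∑ x, γ x y ≤ K • (1 + C) := by
          simpa using sum_le_card_nsmul univ (γ · y) _ fun x _ => (hγ_bounds x).2
      _ ≤ (n : ℝ) ^ 5 := by
          rw [nsmul_eq_mul]
          exact mul_one_add_pi_mul_exp_one_le_pow_five hnR (by exact_mod_cast hKn)
            (by positivity) hMn
  constructor
  · calc -2 * log n = log (((n : ℝ) ^ 2)⁻¹) := by rw [log_inv, log_pow]; push_cast; ring
      _ ≤ log (∑ x, γ x y) := log_le_log hfloor0 hlow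
  · calc log (∑ x, γ x y) ≤ log ((n : ℝ) ^ 5) := log_le_log (hfloor0.trans_le hlow) hup
      _ = 5 * log n := by rw [log_pow]; push_cast; ring

/-- Logarithmic bounds on the sum of emission densities of the mixture models built from
exponential power distributions `ψ(y) = exp(-y^p)/(2Γ(1+1/p))`, relative to the dominating
density `G_λ(y) = 1/(π(1+y²))`:
`-2 log n ≤ log(Σ_x γ_x(y)) ≤ 5 log n` for all `y ∈ ℝ`. -/
theorem stmt12 (p : ℕ) (hp2 : 2 ≤ p) (hpeven : Even p)
    (n : ℕ) (hn : 10 ≤ n)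
    (K M : ℕ) (hK1 : 1 ≤ K) (hKn : K ≤ n) (hM1 : 1 ≤ M) (hMn : (M : ℝ) ≤ (n : ℝ) / 2)
    (w : Fin K → Fin M → ℝ) (hw0 : ∀ x i, 0 ≤ w x i) (hwsum : ∀ x, ∑ i, w x i = 1)
    (s : Fin K → Fin M → ℝ) (hs : ∀ x i, 1 / (M : ℝ) ≤ s x i ∧ s x i ≤ 1)
    (μ : Fin K → Fin M → ℝ) (hμ : ∀ x i, -(n : ℝ) ≤ μ x i ∧ μ x i ≤ (n : ℝ))
    (γ : Fin K → ℝ → ℝ)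
    (hγ : ∀ x y, γ x y = ((n : ℝ) ^ 2)⁻¹ +
      (1 - ((n : ℝ) ^ 2)⁻¹) * (Real.pi * (1 + y ^ 2)) *
        ∑ i, w x i * (1 / (2 * s x i * Real.Gamma (1 + 1 / (p : ℝ))) *
          Real.exp (-((y - μ x i) / s x i) ^ p))) :
    ∀ y : ℝ,
      -2 * Real.log n ≤ Real.log (∑ x, γ x y) ∧
      Real.log (∑ x, γ x y) ≤ 5 * Real.log n :=
  stmt12_general p hp2 hpeven n hn K M hK1 hKn hMn w hw0 hwsum s hs μ hμ γ hγ
end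

section
/- Let (Ω, ℱ, P) be a probability space, B ≥ 1, q ∈ [0,1], c ≥ 0, and let X, Z : Ω → [0,∞) be measurable functions such that for every t ≥ 1, P(X ≥ B t^q) ≤ e^{−t} and P(Z ≥ B t^q) ≤ e^{−t}. Let T : Ω → ℝ be measurable with |T| ≤ X + Z + c almost surely. Then for every u ≥ 1: E[ |T| · 1_{max(X,Z) > B u^q} ] ≤ 6 B u^q e^{−u} + 2 c e^{−u}. -/
/-!
Write `a = B u^q`. The event `S = {max(X,Z) > a}` has probability at most `2e^{-u}`, and on it
`|T| ≤ X + Z + c`, so it suffices to show `∫_S X ≤ 3 a e^{-u}` (likewise for `Z`). Split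
`X ≤ a + (X - a)⁺`: the constant contributes `a P(S) ≤ 2 a e^{-u}`. For the excess, the bound
`s^q ≤ u^q (1 + (s - u))` (valid for `1 ≤ u ≤ s`, `q ≤ 1`) puts the level `a + t` above `B s^q`
with `s = u + t/a`, so `P(X ≥ a + t) ≤ e^{-u} e^{-t/a}`, and the layer-cake formula gives
`E (X - a)⁺ ≤ a e^{-u}`.
-/

open MeasureTheory Real Set

lemma rpow_le_rpow_mul_one_add_sub {q u s : ℝ} (hq : q ≤ 1) (hu : 1 ≤ u) (hus : u ≤ s) :
    s ^ q ≤ u ^ q * (1 + (s - u)) := by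
  have hu0 : 0 < u := by linarith
  calc s ^ q = u ^ q * (s / u) ^ q := by
        rw [div_rpow (by linarith) hu0.le, mul_div_cancel₀ _ (rpow_pos_of_pos hu0 q).ne']
    _ ≤ u ^ q * (s / u) := by
        gcongr
        exact rpow_le_self_of_one_le ((one_le_div hu0).mpr hus) hq
    _ ≤ u ^ q * (1 + (s - u)) := by
        gcongr
        rw [div_le_iff₀ hu0]
        nlinarith

lemma lintegral_exp_neg_inv_mul_Ioi {a : ℝ} (ha : 0 < a) :
    ∫⁻ t in Ioi (0 : ℝ), ENNReal.ofReal (exp (-a⁻¹ * t)) = ENNReal.ofReal a := by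
  rw [← ofReal_integral_eq_lintegral_ofReal (exp_neg_integrableOn_Ioi 0 (inv_pos.2 ha))
    (ae_of_all _ fun _ => (exp_pos _).le), integral_exp_mul_Ioi (by simpa using ha)]
  simp

section Tail

variable {Ω : Type*} [MeasurableSpace Ω] {P : Measure Ω} {Y : Ω → ℝ} {B q u : ℝ}

lemma measure_add_le_le_of_tail (hB : 0 < B) (hq : q ≤ 1) (hu : 1 ≤ u)
    (htail : ∀ t : ℝ, 1 ≤ t → P {ω | B * t ^ q ≤ Y ω} ≤ ENNReal.ofReal (exp (-t)))
    {t : ℝ} (ht : 0 ≤ t) :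
    P {ω | B * u ^ q + t ≤ Y ω}
      ≤ ENNReal.ofReal (exp (-u)) * ENNReal.ofReal (exp (-(B * u ^ q)⁻¹ * t)) := by
  set a := B * u ^ q
  have ha : 0 < a := by positivity
  set s := u + a⁻¹ * t
  have hus : u ≤ s := le_add_of_nonneg_right (by positivity)
  have hthreshold : B * s ^ q ≤ a + t := calc
    B * s ^ q ≤ B * (u ^ q * (1 + (s - u))) := by
      gcongr
      exact rpow_le_rpow_mul_one_add_sub hq hu hus
    _ = a + t := by
      simp only [s, a]
      field_simp
      ring
  calc P {ω | a + t ≤ Y ω} ≤ P {ω | B * s ^ q ≤ Y ω} :=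
        measure_mono fun ω hω => hthreshold.trans hω
    _ ≤ ENNReal.ofReal (exp (-s)) := htail s (hu.trans hus)
    _ = ENNReal.ofReal (exp (-u)) * ENNReal.ofReal (exp (-a⁻¹ * t)) := by
        rw [← ENNReal.ofReal_mul (exp_pos _).le, ← exp_add, neg_mul, ← neg_add]

lemma lintegral_ofReal_sub_le_of_tail (hB : 0 < B) (hq : q ≤ 1) (hu : 1 ≤ u) (hY : Measurable Y)
    (htail : ∀ t : ℝ, 1 ≤ t → P {ω | B * t ^ q ≤ Y ω} ≤ ENNReal.ofReal (exp (-t))) :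
    ∫⁻ ω, ENNReal.ofReal (Y ω - B * u ^ q) ∂P ≤ ENNReal.ofReal (B * u ^ q * exp (-u)) := by
  set a := B * u ^ q
  have ha : 0 < a := by positivity
  have hpos : ∀ ω, ENNReal.ofReal (Y ω - a) = ENNReal.ofReal (max (Y ω - a) 0) := by
    simp [ENNReal.ofReal_max]
  calc ∫⁻ ω, ENNReal.ofReal (Y ω - a) ∂P
      = ∫⁻ t in Ioi 0, P {ω | t ≤ max (Y ω - a) 0} := by
        simp_rw [hpos]
        exact lintegral_eq_lintegral_meas_le P (ae_of_all _ fun _ => le_max_right _ _)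
          ((hY.sub_const a).max measurable_const).aemeasurable
    _ ≤ ∫⁻ t in Ioi 0, ENNReal.ofReal (exp (-u)) * ENNReal.ofReal (exp (-a⁻¹ * t)) := by
        refine setLIntegral_mono (by fun_prop) fun t ht => ?_
        refine (measure_mono fun ω hω => ?_).trans
          (measure_add_le_le_of_tail hB hq hu htail (le_of_lt ht))
        simp only [Set.mem_ofPred_eq, le_max_iff] at hω ⊢
        rcases hω with h | h
        · linarith
        · exact absurd h (not_le.2 ht)
    _ = ENNReal.ofReal (a * exp (-u)) := by
        rw [lintegral_const_mul' _ _ ENNReal.ofReal_ne_top, lintegral_exp_neg_inv_mul_Ioi ha,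
          ← ENNReal.ofReal_mul (exp_pos _).le, mul_comm]

lemma setLIntegral_ofReal_le_of_tail (hB : 0 < B) (hq : q ≤ 1) (hu : 1 ≤ u) (hY : Measurable Y)
    (htail : ∀ t : ℝ, 1 ≤ t → P {ω | B * t ^ q ≤ Y ω} ≤ ENNReal.ofReal (exp (-t)))
    {A : Set Ω} (hA : P A ≤ ENNReal.ofReal (2 * exp (-u))) :
    ∫⁻ ω in A, ENNReal.ofReal (Y ω) ∂P ≤ ENNReal.ofReal (3 * (B * u ^ q) * exp (-u)) := by
  set a := B * u ^ q
  have ha : 0 < a := by positivity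
  calc ∫⁻ ω in A, ENNReal.ofReal (Y ω) ∂P
      ≤ ∫⁻ ω in A, (ENNReal.ofReal a + ENNReal.ofReal (Y ω - a)) ∂P :=
        lintegral_mono fun ω => by
          simpa using ENNReal.ofReal_add_le (p := a) (q := Y ω - a)
    _ = ENNReal.ofReal a * P A + ∫⁻ ω in A, ENNReal.ofReal (Y ω - a) ∂P := by
        rw [lintegral_add_left measurable_const, setLIntegral_const]
    _ ≤ ENNReal.ofReal a * ENNReal.ofReal (2 * exp (-u)) + ENNReal.ofReal (a * exp (-u)) := by
        gcongr
        exact (lintegral_mono' Measure.restrict_le_self le_rfl).trans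
          (lintegral_ofReal_sub_le_of_tail hB hq hu hY htail)
    _ = ENNReal.ofReal (3 * a * exp (-u)) := by
        rw [← ENNReal.ofReal_mul ha.le, ← ENNReal.ofReal_add (by positivity) (by positivity)]
        ring_nf

end Tail

lemma measure_lt_max_le_add {Ω : Type*} [MeasurableSpace Ω] (μ : Measure Ω) (r : ℝ)
    (X Z : Ω → ℝ) : μ {ω | r < max (X ω) (Z ω)} ≤ μ {ω | r ≤ X ω} + μ {ω | r ≤ Z ω} := by
  refine (measure_mono fun ω hω => ?_).trans (measure_union_le _ _)
  simp only [Set.mem_union, Set.mem_ofPred_eq, lt_max_iff] at hω ⊢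
  exact hω.imp le_of_lt le_of_lt

lemma setLIntegral_ofReal_le_of_ae_le_add_add {Ω : Type*} [MeasurableSpace Ω] {μ : Measure Ω}
    {F X Z : Ω → ℝ} {c : ℝ} (hZ : Measurable Z) (hF : ∀ᵐ ω ∂μ, F ω ≤ X ω + Z ω + c)
    (S : Set Ω) :
    ∫⁻ ω in S, ENNReal.ofReal (F ω) ∂μ ≤ (∫⁻ ω in S, ENNReal.ofReal (X ω) ∂μ)
      + (∫⁻ ω in S, ENNReal.ofReal (Z ω) ∂μ) + ENNReal.ofReal c * μ S := by
  rw [← setLIntegral_const, ← lintegral_add_right _ hZ.ennreal_ofReal,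
    ← lintegral_add_right _ measurable_const]
  refine lintegral_mono_ae ((ae_restrict_of_ae hF).mono fun ω hω => ?_)
  exact (ENNReal.ofReal_le_ofReal hω).trans
    (ENNReal.ofReal_add_le.trans (add_le_add_left ENNReal.ofReal_add_le _))

theorem stmt13_general {Ω : Type*} [MeasurableSpace Ω] (P : Measure Ω) [IsProbabilityMeasure P]
    (B : ℝ) (hB : 1 ≤ B) (q : ℝ) (hq1 : q ≤ 1) (c : ℝ) (hc : 0 ≤ c)
    (X Z : Ω → ℝ) (hX : Measurable X) (hZ : Measurable Z)
    (hXtail : ∀ t : ℝ, 1 ≤ t → P {ω | B * t ^ q ≤ X ω} ≤ ENNReal.ofReal (Real.exp (-t)))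
    (hZtail : ∀ t : ℝ, 1 ≤ t → P {ω | B * t ^ q ≤ Z ω} ≤ ENNReal.ofReal (Real.exp (-t)))
    (T : Ω → ℝ) (hTbound : ∀ᵐ ω ∂P, |T ω| ≤ X ω + Z ω + c) :
    ∀ u : ℝ, 1 ≤ u →
      ∫ ω in {ω | B * u ^ q < max (X ω) (Z ω)}, |T ω| ∂P
        ≤ 6 * B * u ^ q * Real.exp (-u) + 2 * c * Real.exp (-u) := by
  intro u hu
  have hB0 : 0 < B := by linarith
  set S : Set Ω := {ω | B * u ^ q < max (X ω) (Z ω)}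
  have hPS : P S ≤ ENNReal.ofReal (2 * exp (-u)) := calc
    P S ≤ P {ω | B * u ^ q ≤ X ω} + P {ω | B * u ^ q ≤ Z ω} :=
      measure_lt_max_le_add P _ X Z
    _ ≤ ENNReal.ofReal (exp (-u)) + ENNReal.ofReal (exp (-u)) :=
      add_le_add (hXtail u hu) (hZtail u hu)
    _ = ENNReal.ofReal (2 * exp (-u)) := by
      rw [← ENNReal.ofReal_add (exp_pos _).le (exp_pos _).le, two_mul]
  have hlintegral : ∫⁻ ω in S, ENNReal.ofReal |T ω| ∂P
      ≤ ENNReal.ofReal (6 * B * u ^ q * exp (-u) + 2 * c * exp (-u)) := calc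
    _ ≤ (∫⁻ ω in S, ENNReal.ofReal (X ω) ∂P) + (∫⁻ ω in S, ENNReal.ofReal (Z ω) ∂P)
          + ENNReal.ofReal c * P S := setLIntegral_ofReal_le_of_ae_le_add_add hZ hTbound S
    _ ≤ ENNReal.ofReal (3 * (B * u ^ q) * exp (-u)) + ENNReal.ofReal (3 * (B * u ^ q) * exp (-u))
          + ENNReal.ofReal c * ENNReal.ofReal (2 * exp (-u)) := by
      gcongr
      · exact setLIntegral_ofReal_le_of_tail hB0 hq1 hu hX hXtail hPS
      · exact setLIntegral_ofReal_le_of_tail hB0 hq1 hu hZ hZtail hPS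
    _ = _ := by
      rw [← ENNReal.ofReal_mul hc, ← ENNReal.ofReal_add (by positivity) (by positivity),
        ← ENNReal.ofReal_add (by positivity) (by positivity)]
      ring_nf
  calc ∫ ω in S, |T ω| ∂P ≤ ‖∫ ω in S, |T ω| ∂P‖ := le_norm_self _
    _ ≤ (∫⁻ ω in S, ENNReal.ofReal |T ω| ∂P).toReal := by
      simpa only [Real.norm_eq_abs, abs_abs] using norm_integral_le_lintegral_norm (fun ω => |T ω|)
    _ ≤ _ := ENNReal.toReal_le_of_le_ofReal (by positivity) hlintegral

/-- Truncation error bound: if `|T| ≤ X + Z + c` a.s. where `X` and `Z` have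
subpolynomial tails `P(X ≥ B t^q) ≤ e^{-t}`, then
`E[|T| 1_{max(X,Z) > B u^q}] ≤ 6 B u^q e^{-u} + 2 c e^{-u}` for all `u ≥ 1`. -/
theorem stmt13 {Ω : Type*} [MeasurableSpace Ω] (P : Measure Ω) [IsProbabilityMeasure P]
    (B : ℝ) (hB : 1 ≤ B) (q : ℝ) (hq0 : 0 ≤ q) (hq1 : q ≤ 1) (c : ℝ) (hc : 0 ≤ c)
    (X Z : Ω → ℝ) (hX : Measurable X) (hZ : Measurable Z)
    (hX0 : ∀ ω, 0 ≤ X ω) (hZ0 : ∀ ω, 0 ≤ Z ω)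
    (hXtail : ∀ t : ℝ, 1 ≤ t → P {ω | B * t ^ q ≤ X ω} ≤ ENNReal.ofReal (Real.exp (-t)))
    (hZtail : ∀ t : ℝ, 1 ≤ t → P {ω | B * t ^ q ≤ Z ω} ≤ ENNReal.ofReal (Real.exp (-t)))
    (T : Ω → ℝ) (hT : Measurable T) (hTbound : ∀ᵐ ω ∂P, |T ω| ≤ X ω + Z ω + c) :
    ∀ u : ℝ, 1 ≤ u →
      ∫ ω in {ω | B * u ^ q < max (X ω) (Z ω)}, |T ω| ∂P
        ≤ 6 * B * u ^ q * Real.exp (-u) + 2 * c * Real.exp (-u) :=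
  stmt13_general P B hB q hq1 c hc X Z hX hZ hXtail hZtail T hTbound
end
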